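/- arXiv:2501.02723 — 7 statements merged into one kernel-verified Lean document; each statement's English description precedes it below -/
import Mathlib

section
/- The map R ↦ X(R) from subsets of (A∖{#})*_odd to shift spaces over A is injective: if R₁ ≠ R₂ then X(R₁) ≠ X(R₂). -/
open Function

/-- The word `w` occurs in the bi-infinite sequence `x`. -/
def Occurs {A : Type*} (w : List A) (x : ℤ → A) : Prop :=
  ∃ i : ℤ, ∀ j : Fin w.length, x (i + (j.1 : ℤ)) = w.get j

/-- The shift space `X(R)`: sequences in which no word `#w#`, with `w` an odd-length word
over `A∖{#}` not belonging to `R`, occurs. -/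
def XR {A : Type*} (hash : A) (R : Set (List A)) : Set (ℤ → A) :=
  {x | ∀ w : List A, (∀ c ∈ w, c ≠ hash) → Odd w.length → w ∉ R →
        ¬ Occurs ([hash] ++ w ++ [hash]) x}

lemma hashed_getElem_zero {A : Type*} (hash : A) (v : List A) :
    ([hash] ++ v ++ [hash])[0]'(by simp) = hash := by simp

lemma hashed_getElem_mid {A : Type*} (hash : A) (v : List A) (j : ℕ) (hj : j < v.length) :
    ([hash] ++ v ++ [hash])[j + 1]'(by simp; omega) = v[j] := by
  rw [List.getElem_append_left (by simp; omega)]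
  simp

lemma hashed_getElem_last {A : Type*} (hash : A) (v : List A) :
    ([hash] ++ v ++ [hash])[v.length + 1]'(by simp) = hash := by
  rw [List.getElem_append_right (by simp)]
  simp

lemma key_lemma {A : Type*} (hash : A) (R₁ R₂ : Set (List A)) (w : List A)
    (hw1 : w ∈ R₁) (hw2 : w ∉ R₂) (hodd : Odd w.length)
    (hhash : ∀ c ∈ w, c ≠ hash) : XR hash R₁ ≠ XR hash R₂ := by
  set n : ℕ := w.length + 1 with hn
  have hnpos : 0 < (n : ℤ) := by positivity
  have hidx : ∀ k : ℤ, (k % (n : ℤ)).toNat < n := by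
    intro k
    have h1 := Int.emod_nonneg k (by omega : (n : ℤ) ≠ 0)
    have h2 := Int.emod_lt_of_pos k hnpos
    omega
  set u : List A := hash :: w with hu
  have hun : u.length = n := rfl
  set x : ℤ → A := fun k => u[(k % (n : ℤ)).toNat]'(by rw [hun]; exact hidx k) with hx
  -- x k = hash when n ∣ k
  have hmod0 : ∀ k : ℤ, (n : ℤ) ∣ k → x k = hash := by
    intro k hk
    have h0 : k % (n : ℤ) = 0 := Int.emod_eq_zero_of_dvd hk
    simp [hx, h0, hu]
  -- value at position k + j + 1 for n ∣ k
  have hmodj : ∀ (k : ℤ) (j : ℕ) (hj : j < w.length), (n : ℤ) ∣ k →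
      x (k + ((j : ℤ) + 1)) = w[j] := by
    intro k j hj hk
    obtain ⟨q, rfl⟩ := hk
    have h1 : ((n : ℤ) * q + ((j : ℤ) + 1)) % (n : ℤ) = (j : ℤ) + 1 := by
      rw [add_comm, Int.add_mul_emod_self_left]
      exact Int.emod_eq_of_lt (by omega) (by push_cast; omega)
    have h2 : (((n : ℤ) * q + ((j : ℤ) + 1)) % (n : ℤ)).toNat = j + 1 := by
      rw [h1]; omega
    show u[(((n : ℤ) * q + ((j : ℤ) + 1)) % (n : ℤ)).toNat]'_ = w[j]
    simp only [h2, hu, List.getElem_cons_succ]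
  -- x k ≠ hash when ¬ n ∣ k
  have hnothash : ∀ k : ℤ, ¬ (n : ℤ) ∣ k → x k ≠ hash := by
    intro k hk
    have h1 := Int.emod_nonneg k (by omega : (n : ℤ) ≠ 0)
    have hne0 : (k % (n : ℤ)).toNat ≠ 0 := by
      intro h0
      exact hk (Int.dvd_of_emod_eq_zero (by omega))
    obtain ⟨m, hm⟩ := Nat.exists_eq_succ_of_ne_zero hne0
    have hmlt : m < w.length := by
      have := hidx k
      omega
    show u[(k % (n : ℤ)).toNat]'_ ≠ hash
    simp only [hm, hu, List.getElem_cons_succ]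
    exact hhash w[m] (List.getElem_mem hmlt)
  -- x is in XR R₁
  have hx1 : x ∈ XR hash R₁ := by
    intro v hvhash hvodd hvR1 hocc
    obtain ⟨i, hocc⟩ := hocc
    set m : ℕ := v.length with hm
    have hLlen : ([hash] ++ v ++ [hash]).length = m + 2 := by simp [hm]
    have hget : ∀ (j : ℕ) (hj : j < m + 2),
        x (i + (j : ℤ)) = ([hash] ++ v ++ [hash])[j]'(by omega) := by
      intro j hj
      have := hocc ⟨j, by omega⟩
      simpa using this
    -- position 0 : hash
    have hdvd_i : (n : ℤ) ∣ i := by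
      by_contra h
      apply hnothash i h
      have := hget 0 (by omega)
      simpa [hashed_getElem_zero] using this
    -- position m+1 : hash
    have hdvd_m1 : (n : ℤ) ∣ ((m : ℤ) + 1) := by
      have h1 : x (i + ((m : ℤ) + 1)) = hash := by
        have := hget (m + 1) (by omega)
        push_cast at this
        rw [this]
        exact hashed_getElem_last hash v
      have h2 : (n : ℤ) ∣ (i + ((m : ℤ) + 1)) := by
        by_contra h
        exact hnothash _ h h1
      exact (dvd_add_right hdvd_i).mp h2
    -- middle positions
    have hmid : ∀ (j : ℕ) (hj : j < m), x (i + ((j : ℤ) + 1)) = v[j]'(by omega) := by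
      intro j hj
      have := hget (j + 1) (by omega)
      push_cast at this
      rw [this]
      exact hashed_getElem_mid hash v j hj
    -- m + 1 = n
    have hmn : m + 1 = n := by
      have hge : (n : ℤ) ≤ (m : ℤ) + 1 := Int.le_of_dvd (by omega) hdvd_m1
      by_contra hne'
      have hlt : n < m + 1 := by omega
      have h1 : x (i + (((n - 1 : ℕ) : ℤ) + 1)) = v[n - 1]'(by omega) :=
        hmid (n - 1) (by omega)
      have h2 : x (i + (((n - 1 : ℕ) : ℤ) + 1)) = hash := by
        apply hmod0
        have : ((n - 1 : ℕ) : ℤ) + 1 = (n : ℤ) := by push_cast; omega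
        rw [this]
        exact dvd_add hdvd_i dvd_rfl
      exact hvhash _ (List.getElem_mem (by omega : n - 1 < v.length)) (by rw [← h1, h2])
    -- hence v = w
    have hveq : v = w := by
      apply List.ext_getElem (by omega)
      intro j hj hjw
      rw [← hmid j (by omega), hmodj i j hjw hdvd_i]
    exact hvR1 (hveq ▸ hw1)
  -- x is not in XR R₂
  have hx2 : x ∉ XR hash R₂ := by
    intro hmem
    apply hmem w hhash hodd hw2
    refine ⟨0, ?_⟩
    have key : ∀ (jv : ℕ) (hjv : jv < n + 1),
        x ((jv : ℤ)) = ([hash] ++ w ++ [hash])[jv]'(by simp; omega) := by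
      intro jv hjv
      rcases Nat.eq_zero_or_pos jv with h0 | hpos
      · subst h0
        have : x ((0 : ℕ) : ℤ) = hash := hmod0 0 (dvd_zero _)
        simpa [hashed_getElem_zero] using this
      · rcases Nat.lt_or_ge jv n with hlt | hge
        · obtain ⟨j', hj'⟩ := Nat.exists_eq_succ_of_ne_zero (by omega : jv ≠ 0)
          subst hj'
          have hj'w : j' < w.length := by omega
          have h1 : x ((0 : ℤ) + ((j' : ℤ) + 1)) = w[j'] := hmodj 0 j' hj'w (dvd_zero _)
          have h2 : ((j' + 1 : ℕ) : ℤ) = (0 : ℤ) + ((j' : ℤ) + 1) := by push_cast; ring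
          have h3 : x ((j' + 1 : ℕ) : ℤ) = w[j'] := by rw [h2]; exact h1
          show x ((j' + 1 : ℕ) : ℤ) = ([hash] ++ w ++ [hash])[j' + 1]'(by simp; omega)
          rw [h3]
          exact (hashed_getElem_mid hash w j' hj'w).symm
        · have hjn : jv = n := by omega
          have h1 : x ((jv : ℤ)) = hash := hmod0 _ (by rw [hjn])
          rw [h1]
          simp only [hjn]
          exact (hashed_getElem_last hash w).symm
    intro j
    have hjlt : j.1 < n + 1 := by
      have := j.2
      simp at this
      omega
    simp only [List.get_eq_getElem, zero_add]
    exact key j.1 hjlt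
  intro hEq
  rw [hEq] at hx1
  exact hx2 hx1

/-- The map `R ↦ X(R)` is injective on sets of odd-length words over `A∖{#}`. -/
theorem stmt3 {A : Type*} [Fintype A] (hash : A) (hA : ∃ a : A, a ≠ hash)
    (R₁ R₂ : Set (List A))
    (hR₁ : ∀ w ∈ R₁, Odd w.length ∧ ∀ c ∈ w, c ≠ hash)
    (hR₂ : ∀ w ∈ R₂, Odd w.length ∧ ∀ c ∈ w, c ≠ hash)
    (hne : R₁ ≠ R₂) :
    XR hash R₁ ≠ XR hash R₂ := by
  obtain ⟨w, hw⟩ : ∃ w, (w ∈ R₁ ∧ w ∉ R₂) ∨ (w ∈ R₂ ∧ w ∉ R₁) := by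
    by_contra h
    push_neg at h
    exact hne (Set.ext fun y => by have := h y; tauto)
  rcases hw with hw | hw
  · exact key_lemma hash R₁ R₂ w hw.1 hw.2 (hR₁ w hw.1).1 (hR₁ w hw.1).2
  · exact (key_lemma hash R₂ R₁ w hw.1 hw.2 (hR₂ w hw.1).1 (hR₂ w hw.1).2).symm
end

section
/- For every R ⊆ (A∖{#})*_odd, the symbolic system X(R) has the specification property; in fact for all words w, u ∈ Lang(X(R)) there exists a word v of length exactly 2 such that wvu ∈ Lang(X(R)). -/
open Function

/-- The shift map on bi-infinite sequences. -/
def shiftMap {A : Type*} (x : ℤ → A) : ℤ → A := fun n => x (n + 1)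

/-- The word `w` belongs to the language of the symbolic system `X`. -/
def InLang {A : Type*} (X : Set (ℤ → A)) (w : List A) : Prop := ∃ x ∈ X, Occurs w x

open Classical in
/-- standard metric on `A^ℤ` -/
noncomputable def stdDist {A : Type*} (x y : ℤ → A) : ℝ :=
  if x = y then 0 else (2 : ℝ)⁻¹ ^ sInf {k : ℕ | ∃ m : ℤ, m.natAbs ≤ k ∧ x m ≠ y m}

/-- The specification property for a symbolic system `X ⊆ A^ℤ`: for every `ε > 0` there is
`k` such that every `k`-spaced specification (family of orbit segments `σ^{[aᵢ,bᵢ)}(xᵢ)` with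
`aᵢ₊₁ - bᵢ ≥ k`) is `ε`-traced by a point of `X`. -/
def HasSpec {A : Type*} (X : Set (ℤ → A)) : Prop :=
  ∀ ε : ℝ, 0 < ε → ∃ k : ℕ, ∀ n : ℕ, ∀ x : Fin n → (ℤ → A), (∀ i, x i ∈ X) →
    ∀ a b : Fin n → ℕ, (∀ i, a i < b i) →
      (∀ i : Fin n, ∀ h : i.1 + 1 < n, b i + k ≤ a ⟨i.1 + 1, h⟩) →
      ∃ y ∈ X, ∀ i : Fin n, ∀ j : ℕ, a i ≤ j → j < b i →
        stdDist (shiftMap^[j] (x i)) (shiftMap^[j] y) ≤ ε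

section Aux

variable {A : Type*}

lemma shift_iterate (x : ℤ → A) (j : ℕ) : shiftMap^[j] x = fun m => x (m + j) := by
  induction j with
  | zero => simp
  | succ j ih =>
    rw [Function.iterate_succ_apply', ih]
    funext m
    simp only [shiftMap]
    congr 1
    push_cast
    ring

lemma occurs_translate (w : List A) (x : ℤ → A) (t : ℤ) :
    Occurs w (fun n => x (n + t)) ↔ Occurs w x := by
  constructor
  · rintro ⟨i, hi⟩
    exact ⟨i + t, fun j => by have := hi j; simpa [add_right_comm] using this⟩
  · rintro ⟨i, hi⟩
    refine ⟨i - t, fun j => ?_⟩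
    have := hi j
    rw [← this]
    ring_nf

lemma XR_translate {hash : A} {R : Set (List A)} {x : ℤ → A} (hx : x ∈ XR hash R) (t : ℤ) :
    (fun n => x (n + t)) ∈ XR hash R := by
  intro w hfree hodd hwR hocc
  exact hx w hfree hodd hwR ((occurs_translate _ _ _).mp hocc)

lemma segment_occurs (x : ℤ → A) (s : ℤ) (L : ℕ) :
    Occurs (List.ofFn fun j : Fin L => x (s + j)) x := by
  refine ⟨s, fun j => ?_⟩
  simp [List.get_ofFn]

lemma occ_facts {hash : A} {w' : List A} (hfree : ∀ c ∈ w', c ≠ hash) {z : ℤ → A} {i : ℤ}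
    (hi : ∀ j : Fin ([hash] ++ w' ++ [hash]).length, z (i + (j.1 : ℤ)) = ([hash] ++ w' ++ [hash]).get j) :
    z i = hash ∧ z (i + w'.length + 1) = hash ∧
      ∀ m : ℤ, i < m → m < i + w'.length + 1 → z m ≠ hash := by
  have hlen : ([hash] ++ w' ++ [hash]).length = w'.length + 2 := by simp
  refine ⟨?_, ?_, ?_⟩
  · have := hi ⟨0, by simp⟩
    simpa using this
  · have hlast := hi ⟨w'.length + 1, by simp⟩
    have hcast : i + (w'.length : ℤ) + 1 = i + ((w'.length + 1 : ℕ) : ℤ) := by push_cast; ring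
    rw [hcast, hlast]
    simp only [List.get_eq_getElem]
    rw [List.getElem_append_right (by simp)]
    simp
  · intro m h1 h2
    set j : ℕ := (m - i - 1).toNat with hj
    have hji : (j : ℤ) = m - i - 1 := Int.toNat_of_nonneg (by omega)
    have hjlt : j < w'.length := by omega
    have := hi ⟨1 + j, by simp; omega⟩
    simp only [List.get_eq_getElem] at this
    have heq : ([hash] ++ w' ++ [hash])[1 + j]'(by simp; omega) = w'[j] := by
      simp [Nat.add_comm 1 j, List.getElem_append, hjlt]
    have hz : z (i + ((1 + j : ℕ) : ℤ)) = w'[j] := this.trans heq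
    have hm : i + ((1 + j : ℕ) : ℤ) = m := by push_cast; omega
    rw [hm] at hz
    rw [hz]
    exact hfree _ (List.getElem_mem _)

lemma occurs_transfer {F : List A} {z x : ℤ → A} {i t : ℤ}
    (hi : ∀ j : Fin F.length, z (i + (j.1 : ℤ)) = F.get j)
    (hag : ∀ n : ℤ, i ≤ n → n < i + F.length → z n = x (n + t)) : Occurs F x := by
  refine ⟨i + t, fun j => ?_⟩
  have hb : i ≤ i + (j.1 : ℤ) := by omega
  have hb2 : i + (j.1 : ℤ) < i + F.length := by
    have := j.2; omega
  have := hag (i + (j.1 : ℤ)) hb hb2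
  rw [show i + t + (j.1 : ℤ) = (i + (j.1 : ℤ)) + t by ring, ← this]
  exact hi j

lemma glue_main {hash a : A} (ha : a ≠ hash) {R : Set (List A)}
    {x y : ℤ → A} (hxX : x ∈ XR hash R) (hyX : y ∈ XR hash R)
    (w u : List A) (s t : ℤ)
    (hxw : ∀ j : Fin w.length, x (s + (j.1 : ℤ)) = w.get j)
    (hyu : ∀ j : Fin u.length, y (t + (j.1 : ℤ)) = u.get j) :
    ∃ v : List A, v.length = 2 ∧ InLang (XR hash R) (w ++ v ++ u) := by
  classical
  set c : ℤ := s + w.length with hc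
  set Z : A → A → ℤ → A := fun v0 v1 n =>
    if n < c then x n else if n = c then v0 else if n = c + 1 then v1
    else y (n - (c + 2) + t) with hZ
  have hZlt : ∀ v0 v1 : A, ∀ n : ℤ, n < c → Z v0 v1 n = x n := by
    intro v0 v1 n hn; simp [hZ, hn]
  have hZc : ∀ v0 v1 : A, Z v0 v1 c = v0 := by
    intro v0 v1; simp [hZ]
  have hZc1 : ∀ v0 v1 : A, Z v0 v1 (c + 1) = v1 := by
    intro v0 v1; simp [hZ]
  have hZge : ∀ v0 v1 : A, ∀ n : ℤ, c + 2 ≤ n → Z v0 v1 n = y (n - (c + 2) + t) := by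
    intro v0 v1 n hn
    have h1 : ¬ n < c := by omega
    have h2 : n ≠ c := by omega
    have h3 : n ≠ c + 1 := by omega
    simp [hZ, h1, h2, h3]
  have hOcc : ∀ v0 v1 : A, Occurs (w ++ [v0, v1] ++ u) (Z v0 v1) := by
    intro v0 v1
    refine ⟨s, fun j => ?_⟩
    obtain ⟨jn, hjn⟩ := j
    have hlen : (w ++ [v0, v1] ++ u).length = w.length + 2 + u.length := by
      simp; omega
    rw [hlen] at hjn
    simp only [List.get_eq_getElem]
    rcases lt_or_ge jn w.length with h1 | h1
    · rw [hZlt _ _ _ (by omega)]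
      have := hxw ⟨jn, h1⟩
      simp only [List.get_eq_getElem] at this
      rw [this]
      rw [List.getElem_append_left (by simp [h1]; omega)]
      exact (List.getElem_append_left h1).symm
    · have hge2 : ¬ jn < w.length.add ([v0,v1].length) → jn - w.length.add ([v0,v1].length) < u.length := by
        simp; omega
      rcases eq_or_lt_of_le h1 with h2 | h2
      · have : s + (jn : ℤ) = c := by omega
        rw [this, hZc]
        simp only [List.getElem_append]
        split_ifs with hA hB
        · omega
        · simp [show jn - w.length = 0 from by omega]
        · simp at hA; omega
      · rcases eq_or_lt_of_le (by omega : w.length + 1 ≤ jn) with h3 | h3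
        · have : s + (jn : ℤ) = c + 1 := by omega
          rw [this, hZc1]
          simp only [List.getElem_append]
          split_ifs with hA hB
          · omega
          · simp [show jn - w.length = 1 from by omega]
          · simp at hA; omega
        · have hge : c + 2 ≤ s + (jn : ℤ) := by omega
          rw [hZge _ _ _ hge]
          have hju : jn - w.length - 2 < u.length := by omega
          have := hyu ⟨jn - w.length - 2, hju⟩
          simp only [List.get_eq_getElem] at this
          have harg : s + (jn : ℤ) - (c + 2) + t = t + ((jn - w.length - 2 : ℕ) : ℤ) := by
            push_cast [h1]
            omega
          rw [harg, this]
          simp only [List.getElem_append]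
          split_ifs with hA hB
          · exfalso; omega
          · exfalso; simp at hA; omega
          · have hidx : jn - (w ++ [v0, v1]).length = jn - w.length - 2 := by simp; omega
            simp only [hidx]
  -- transfers
  have htx : ∀ (v0 v1 : A) (w' : List A) (i : ℤ),
      (∀ j : Fin ([hash] ++ w' ++ [hash]).length,
        Z v0 v1 (i + (j.1 : ℤ)) = ([hash] ++ w' ++ [hash]).get j) →
      i + (w'.length : ℤ) + 1 < c → Occurs ([hash] ++ w' ++ [hash]) x := by
    intro v0 v1 w' i hi hlt
    refine occurs_transfer (t := 0) hi (fun n h1 h2 => ?_)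
    have hlen : (([hash] ++ w' ++ [hash]).length : ℤ) = (w'.length : ℤ) + 2 := by
      push_cast; simp; ring
    rw [hlen] at h2
    rw [add_zero]
    exact hZlt _ _ _ (by omega)
  have hty : ∀ (v0 v1 : A) (w' : List A) (i : ℤ),
      (∀ j : Fin ([hash] ++ w' ++ [hash]).length,
        Z v0 v1 (i + (j.1 : ℤ)) = ([hash] ++ w' ++ [hash]).get j) →
      c + 2 ≤ i → Occurs ([hash] ++ w' ++ [hash]) y := by
    intro v0 v1 w' i hi hge
    refine occurs_transfer (t := t - (c + 2)) hi (fun n h1 h2 => ?_)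
    rw [hZge _ _ _ (by omega)]
    congr 1
    ring
  obtain ⟨a, ha⟩ : ∃ a : A, a ≠ hash := ⟨a, ha⟩
  by_cases hP : ∃ m : ℤ, m < c ∧ x m = hash
  · by_cases hQ : ∃ m : ℤ, t ≤ m ∧ y m = hash
    · obtain ⟨p, hp, hpmax⟩ := Int.exists_greatest_of_bdd
        (⟨c, fun m hm => le_of_lt hm.1⟩ : ∃ b : ℤ, ∀ m : ℤ, (m < c ∧ x m = hash) → m ≤ b) hP
      obtain ⟨q, hq, hqmin⟩ := Int.exists_least_of_bdd
        (⟨t, fun m hm => hm.1⟩ : ∃ b : ℤ, ∀ m : ℤ, (t ≤ m ∧ y m = hash) → b ≤ m) hQ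
      by_cases hE : (c - 1 - p + (q - t)) % 2 = 0
      · -- v = [a, a]
        refine ⟨[a, a], by simp, Z a a, ?_, hOcc a a⟩
        intro w' hfree hodd hw'R hocc
        obtain ⟨i, hi⟩ := hocc
        obtain ⟨hzi, hzi', hint⟩ := occ_facts hfree hi
        have hodd' := Nat.odd_iff.mp hodd
        rcases lt_or_ge (i + (w'.length : ℤ) + 1) c with hA | hA
        · exact hxX w' hfree hodd hw'R (htx a a w' i hi hA)
        rcases lt_or_ge i (c + 2) with hB | hB
        · -- middle case
          have hic : i ≠ c := fun h => ha (by rw [← hZc a a, ← h]; exact hzi)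
          have hic1 : i ≠ c + 1 := fun h => ha (by rw [← hZc1 a a, ← h]; exact hzi)
          have hic' : i + (w'.length : ℤ) + 1 ≠ c := fun h => ha (by rw [← hZc a a, ← h]; exact hzi')
          have hic1' : i + (w'.length : ℤ) + 1 ≠ c + 1 :=
            fun h => ha (by rw [← hZc1 a a, ← h]; exact hzi')
          have hile : i ≤ c - 1 := by omega
          have hige : c + 2 ≤ i + (w'.length : ℤ) + 1 := by omega
          have hxi : x i = hash := by rw [← hZlt a a i (by omega)]; exact hzi
          have hip : i = p := by
            have h1 : i ≤ p := hpmax i ⟨by omega, hxi⟩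
            by_contra hne
            exact hint p (by omega) (by omega) (by rw [hZlt a a p hp.1]; exact hp.2)
          have hyq : y (i + (w'.length : ℤ) + 1 - (c + 2) + t) = hash := by
            rw [← hZge a a _ (by omega)]; exact hzi'
          have hiq : i + (w'.length : ℤ) + 1 - (c + 2) + t = q := by
            have h1 : q ≤ i + (w'.length : ℤ) + 1 - (c + 2) + t := hqmin _ ⟨by omega, hyq⟩
            by_contra hne
            refine hint (q - t + (c + 2)) (by omega) (by omega) ?_
            rw [hZge a a _ (by omega), show q - t + (c + 2) - (c + 2) + t = q by ring]
            exact hq.2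
          omega
        · exact hyX w' hfree hodd hw'R (hty a a w' i hi hB)
      · by_cases hα : (c - 1 - p) % 2 = 0
        · -- v = [hash, a]
          refine ⟨[hash, a], by simp, Z hash a, ?_, hOcc hash a⟩
          intro w' hfree hodd hw'R hocc
          obtain ⟨i, hi⟩ := hocc
          obtain ⟨hzi, hzi', hint⟩ := occ_facts hfree hi
          have hodd' := Nat.odd_iff.mp hodd
          rcases lt_or_ge (i + (w'.length : ℤ) + 1) c with hA | hA
          · exact hxX w' hfree hodd hw'R (htx hash a w' i hi hA)
          have hic1' : i + (w'.length : ℤ) + 1 ≠ c + 1 :=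
            fun h => ha (by rw [← hZc1 hash a, ← h]; exact hzi')
          rcases eq_or_lt_of_le hA with hA2 | hA2
          · -- i' = c
            have hxi : x i = hash := by rw [← hZlt hash a i (by omega)]; exact hzi
            have hip : i = p := by
              have h1 : i ≤ p := hpmax i ⟨by omega, hxi⟩
              by_contra hne
              exact hint p (by omega) (by omega) (by rw [hZlt hash a p hp.1]; exact hp.2)
            omega
          have hige : c + 2 ≤ i + (w'.length : ℤ) + 1 := by omega
          rcases lt_or_ge i c with hB | hB
          · exact hint c (by omega) (by omega) (hZc hash a)
          rcases eq_or_lt_of_le hB with hB2 | hB2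
          · -- i = c
            have hyq : y (i + (w'.length : ℤ) + 1 - (c + 2) + t) = hash := by
              rw [← hZge hash a _ (by omega)]; exact hzi'
            have hiq : i + (w'.length : ℤ) + 1 - (c + 2) + t = q := by
              have h1 : q ≤ i + (w'.length : ℤ) + 1 - (c + 2) + t := hqmin _ ⟨by omega, hyq⟩
              by_contra hne
              refine hint (q - t + (c + 2)) (by omega) (by omega) ?_
              rw [hZge hash a _ (by omega), show q - t + (c + 2) - (c + 2) + t = q by ring]
              exact hq.2
            omega
          have hic1 : i ≠ c + 1 := fun h => ha (by rw [← hZc1 hash a, ← h]; exact hzi)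
          exact hyX w' hfree hodd hw'R (hty hash a w' i hi (by omega))
        · -- v = [a, hash]
          refine ⟨[a, hash], by simp, Z a hash, ?_, hOcc a hash⟩
          intro w' hfree hodd hw'R hocc
          obtain ⟨i, hi⟩ := hocc
          obtain ⟨hzi, hzi', hint⟩ := occ_facts hfree hi
          have hodd' := Nat.odd_iff.mp hodd
          rcases lt_or_ge (i + (w'.length : ℤ) + 1) c with hA | hA
          · exact hxX w' hfree hodd hw'R (htx a hash w' i hi hA)
          have hic' : i + (w'.length : ℤ) + 1 ≠ c :=
            fun h => ha (by rw [← hZc a hash, ← h]; exact hzi')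
          rcases eq_or_lt_of_le hA with hA2 | hA2
          · omega
          rcases lt_or_ge (i + (w'.length : ℤ) + 1) (c + 2) with hA3 | hA3
          · -- i' = c + 1
            have hic : i ≠ c := fun h => ha (by rw [← hZc a hash, ← h]; exact hzi)
            have hxi : x i = hash := by rw [← hZlt a hash i (by omega)]; exact hzi
            have hip : i = p := by
              have h1 : i ≤ p := hpmax i ⟨by omega, hxi⟩
              by_contra hne
              exact hint p (by omega) (by omega) (by rw [hZlt a hash p hp.1]; exact hp.2)
            omega
          rcases lt_or_ge i (c + 1) with hB | hB
          · exact hint (c + 1) (by omega) (by omega) (hZc1 a hash)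
          rcases eq_or_lt_of_le hB with hB2 | hB2
          · -- i = c + 1
            have hyq : y (i + (w'.length : ℤ) + 1 - (c + 2) + t) = hash := by
              rw [← hZge a hash _ (by omega)]; exact hzi'
            have hiq : i + (w'.length : ℤ) + 1 - (c + 2) + t = q := by
              have h1 : q ≤ i + (w'.length : ℤ) + 1 - (c + 2) + t := hqmin _ ⟨by omega, hyq⟩
              by_contra hne
              refine hint (q - t + (c + 2)) (by omega) (by omega) ?_
              rw [hZge a hash _ (by omega), show q - t + (c + 2) - (c + 2) + t = q by ring]
              exact hq.2
            omega
          exact hyX w' hfree hodd hw'R (hty a hash w' i hi (by omega))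
    · -- no hash in y on [t, ∞)
      refine ⟨[a, a], by simp, Z a a, ?_, hOcc a a⟩
      intro w' hfree hodd hw'R hocc
      obtain ⟨i, hi⟩ := hocc
      obtain ⟨hzi, hzi', hint⟩ := occ_facts hfree hi
      rcases lt_or_ge (i + (w'.length : ℤ) + 1) c with hA | hA
      · exact hxX w' hfree hodd hw'R (htx a a w' i hi hA)
      rcases lt_or_ge i (c + 2) with hB | hB
      · have hic' : i + (w'.length : ℤ) + 1 ≠ c :=
          fun h => ha (by rw [← hZc a a, ← h]; exact hzi')
        have hic1' : i + (w'.length : ℤ) + 1 ≠ c + 1 :=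
          fun h => ha (by rw [← hZc1 a a, ← h]; exact hzi')
        have hyq : y (i + (w'.length : ℤ) + 1 - (c + 2) + t) = hash := by
          rw [← hZge a a _ (by omega)]; exact hzi'
        exact hQ ⟨_, by omega, hyq⟩
      · exact hyX w' hfree hodd hw'R (hty a a w' i hi hB)
  · -- no hash in x on (-∞, c)
    refine ⟨[a, a], by simp, Z a a, ?_, hOcc a a⟩
    intro w' hfree hodd hw'R hocc
    obtain ⟨i, hi⟩ := hocc
    obtain ⟨hzi, hzi', hint⟩ := occ_facts hfree hi
    rcases lt_or_ge (i + (w'.length : ℤ) + 1) c with hA | hA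
    · exact hxX w' hfree hodd hw'R (htx a a w' i hi hA)
    rcases lt_or_ge i (c + 2) with hB | hB
    · have hic : i ≠ c := fun h => ha (by rw [← hZc a a, ← h]; exact hzi)
      have hic1 : i ≠ c + 1 := fun h => ha (by rw [← hZc1 a a, ← h]; exact hzi)
      have hxi : x i = hash := by rw [← hZlt a a i (by omega)]; exact hzi
      exact hP ⟨i, by omega, hxi⟩
    · exact hyX w' hfree hodd hw'R (hty a a w' i hi hB)

lemma stdDist_le_pow {x y : ℤ → A} {N : ℕ} (h : ∀ m : ℤ, m.natAbs ≤ N → x m = y m) :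
    stdDist x y ≤ (2 : ℝ)⁻¹ ^ N := by
  by_cases hxy : x = y
  · simp only [stdDist]
    rw [if_pos hxy]
    positivity
  · simp only [stdDist]
    rw [if_neg hxy]
    have hS : {k : ℕ | ∃ m : ℤ, m.natAbs ≤ k ∧ x m ≠ y m}.Nonempty := by
      have : ¬ ∀ m, x m = y m := fun hall => hxy (funext hall)
      push_neg at this
      obtain ⟨m, hm⟩ := this
      exact ⟨m.natAbs, m, le_refl _, hm⟩
    obtain ⟨m, hm1, hm2⟩ := Nat.sInf_mem hS
    have hN : N < sInf {k : ℕ | ∃ m : ℤ, m.natAbs ≤ k ∧ x m ≠ y m} := by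
      by_contra hle
      push_neg at hle
      exact hm2 (h m (le_trans hm1 hle))
    exact pow_le_pow_of_le_one (by norm_num) (by norm_num) (by omega)

lemma chain_lemma {n k : ℕ} {aa bb : Fin n → ℕ} (hab : ∀ i, aa i < bb i)
    (hgap : ∀ i : Fin n, ∀ h : i.1 + 1 < n, bb i + k ≤ aa ⟨i.1 + 1, h⟩) :
    ∀ (i : Fin n) (jv : ℕ) (hjv : jv < n), i.1 < jv → bb i + k ≤ aa ⟨jv, hjv⟩ := by
  intro i jv
  induction jv with
  | zero => intro h h2; omega
  | succ m ihm =>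
    intro hjv hij
    rcases Nat.lt_or_ge i.1 m with h1 | h1
    · have hM : m < n := by omega
      have h2 := ihm hM h1
      have h3 := hab ⟨m, hM⟩
      have h4 : bb ⟨m, hM⟩ + k ≤ aa ⟨m + 1, hjv⟩ := hgap ⟨m, hM⟩ hjv
      omega
    · have h5 : i.1 = m := by omega
      have h6 : bb i + k ≤ aa ⟨i.1 + 1, by omega⟩ := hgap i (by omega)
      have h7 : (⟨i.1 + 1, by omega⟩ : Fin n) = ⟨m + 1, hjv⟩ := by
        simp [Fin.ext_iff, h5]
      rw [h7] at h6
      exact h6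

lemma const_mem {hash a : A} (ha : a ≠ hash) (R : Set (List A)) :
    (fun _ : ℤ => a) ∈ XR hash R := by
  intro w hfree hodd hwR hocc
  obtain ⟨i, hi⟩ := hocc
  have := hi ⟨0, by simp⟩
  simp at this
  exact ha this

lemma getElem_triple_left (W V B : List A) (j : ℕ) (hj : j < W.length)
    (h : j < (W ++ V ++ B).length) : (W ++ V ++ B)[j] = W[j] := by
  rw [List.getElem_append_left (by simp; omega), List.getElem_append_left hj]

lemma getElem_triple_right (W V B : List A) (j : ℕ) (hj : j < B.length)
    (h : W.length + V.length + j < (W ++ V ++ B).length) :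
    (W ++ V ++ B)[W.length + V.length + j] = B[j] := by
  rw [List.getElem_append_right (by simp)]
  have hidx : W.length + V.length + j - (W ++ V).length = j := by simp
  simp only [hidx]

lemma spec_glue {hash aA : A} (ha : aA ≠ hash) {R : Set (List A)} (N : ℕ) :
    ∀ (n : ℕ) (x : Fin n → ℤ → A), (∀ i, x i ∈ XR hash R) →
    ∀ (aa bb : Fin n → ℕ), (∀ i, aa i < bb i) →
    (∀ i : Fin n, ∀ h : i.1 + 1 < n, bb i + (2 * N + 2) ≤ aa ⟨i.1 + 1, h⟩) →
    ∃ y ∈ XR hash R, ∀ i : Fin n, ∀ m : ℤ,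
      (aa i : ℤ) - N ≤ m → m ≤ (bb i : ℤ) - 1 + N → y m = x i m := by
  intro n
  induction n with
  | zero =>
    intro x hx aa bb hab hgap
    exact ⟨fun _ => aA, const_mem ha R, fun i => absurd i.2 (by omega)⟩
  | succ n ih =>
    intro x hx aa bb hab hgap
    rcases Nat.eq_zero_or_pos n with hn | hn
    · subst hn
      refine ⟨x 0, hx 0, fun i m h1 h2 => ?_⟩
      have hi0 : i = 0 := Fin.ext (by omega)
      rw [hi0]
    · obtain ⟨y₀, hy₀X, hy₀⟩ := ih (fun i => x i.castSucc) (fun i => hx _)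
        (fun i => aa i.castSucc) (fun i => bb i.castSucc) (fun i => hab _)
        (fun i h => hgap i.castSucc (by simpa using Nat.lt_succ_of_lt h))
      set Lst : Fin (n + 1) := ⟨n, by omega⟩ with hLst
      set i0 : Fin (n + 1) := ⟨0, by omega⟩ with hi0
      have hLstval : Lst.1 = n := rfl
      have hi0val : i0.1 = 0 := rfl
      have hBig : bb i0 + (2 * N + 2) ≤ aa Lst := chain_lemma hab hgap i0 n (by omega) hn
      have hallB : ∀ i : Fin (n + 1), i.1 < n → bb i + (2 * N + 2) ≤ aa Lst :=
        fun i hi => chain_lemma hab hgap i n (by omega) hi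
      have hall0 : ∀ i : Fin (n + 1), 0 < i.1 → bb i0 + (2 * N + 2) ≤ aa i := by
        intro i h
        have hch := chain_lemma hab hgap i0 i.1 (by omega) h
        have hieta : (⟨i.1, by omega⟩ : Fin (n + 1)) = i := Fin.ext rfl
        rw [hieta] at hch
        exact hch
      have hab0 := hab i0
      have habL := hab Lst
      set s0 : ℤ := (aa i0 : ℤ) - N with hs0
      set Lw : ℕ := aa Lst - aa i0 - 2 with hLwdef
      have hLwZ : (Lw : ℤ) = (aa Lst : ℤ) - (aa i0 : ℤ) - 2 := by omega
      set Lb : ℕ := bb Lst - aa Lst + 2 * N with hLbdef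
      have hLbZ : (Lb : ℤ) = (bb Lst : ℤ) - (aa Lst : ℤ) + 2 * N := by omega
      set W : List A := List.ofFn (fun j : Fin Lw => y₀ (s0 + (j.1 : ℤ))) with hW
      set B : List A := List.ofFn (fun j : Fin Lb => x Lst ((aa Lst : ℤ) - N + (j.1 : ℤ))) with hB
      clear_value W B Lb Lw s0 i0 Lst
      have hWlen : W.length = Lw := by simp [hW]
      have hBlen : B.length = Lb := by simp [hB]
      have hWocc : ∀ j : Fin W.length, y₀ (s0 + (j.1 : ℤ)) = W.get j := by
        intro j; simp [hW, List.get_ofFn]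
      have hBocc : ∀ j : Fin B.length, x Lst ((aa Lst : ℤ) - N + (j.1 : ℤ)) = B.get j := by
        intro j; simp [hB, List.get_ofFn]
      obtain ⟨v, hv, z', hz'X, i₀, hocc⟩ :=
        glue_main ha hy₀X (hx Lst) W B s0 ((aa Lst : ℤ) - N) hWocc hBocc
      refine ⟨fun m => z' (m + (i₀ - s0)), XR_translate hz'X (i₀ - s0), ?_⟩
      have hyW : ∀ m : ℤ, s0 ≤ m → m < s0 + Lw → z' (m + (i₀ - s0)) = y₀ m := by
        intro m h1 h2
        set j : ℕ := (m - s0).toNat with hjdef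
        have hj : (j : ℤ) = m - s0 := Int.toNat_of_nonneg (by omega)
        have hjlt : j < Lw := by omega
        have happ := hocc ⟨j, by simp [hv, hWlen, hBlen]; omega⟩
        simp only [List.get_eq_getElem] at happ
        have harg : m + (i₀ - s0) = i₀ + (j : ℤ) := by omega
        rw [harg, happ, getElem_triple_left W v B j (by omega) _]
        simp only [hW, List.getElem_ofFn]
        congr 1
        omega
      have hyB : ∀ m : ℤ, (aa Lst : ℤ) - N ≤ m → m < (aa Lst : ℤ) - N + Lb →
          z' (m + (i₀ - s0)) = x Lst m := by
        intro m h1 h2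
        set j : ℕ := (m - ((aa Lst : ℤ) - N)).toNat with hjdef
        have hj : (j : ℤ) = m - ((aa Lst : ℤ) - N) := Int.toNat_of_nonneg (by omega)
        have hjlt : j < Lb := by omega
        have happ := hocc ⟨W.length + v.length + j, by simp [hv, hWlen, hBlen]; omega⟩
        simp only [List.get_eq_getElem] at happ
        have harg : m + (i₀ - s0) = i₀ + ((W.length + v.length + j : ℕ) : ℤ) := by
          push_cast [hWlen, hv]
          omega
        rw [harg, happ, getElem_triple_right W v B j (by omega) _]
        simp only [hB, List.getElem_ofFn]
        congr 1
        omega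
      intro i m h1 h2
      show z' (m + (i₀ - s0)) = x i m
      by_cases hi : i.1 < n
      · have hiB : bb i + (2 * N + 2) ≤ aa Lst := hallB i hi
        have h0i : aa i0 ≤ aa i := by
          rcases Nat.eq_zero_or_pos i.1 with h | h
          · have : i = i0 := Fin.ext (by omega)
            rw [this]
          · have := hall0 i h
            omega
        have hw1 : s0 ≤ m := by omega
        have hw2 : m < s0 + Lw := by omega
        rw [hyW m hw1 hw2]
        exact hy₀ ⟨i.1, hi⟩ m h1 h2
      · have hib : i.1 < n + 1 := i.2
        have hieq : i = Lst := Fin.ext (by omega)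
        rw [hieq] at h1 h2 ⊢
        have hw1 : (aa Lst : ℤ) - N ≤ m := h1
        have hw2 : m < (aa Lst : ℤ) - N + Lb := by omega
        exact hyB m hw1 hw2


end Aux

/-- Every `X(R)` has the specification property; in fact any two words of its language
can be joined by a word of length exactly `2`. -/
theorem stmt4 {A : Type*} [Fintype A] (hash : A) (hA : ∃ a : A, a ≠ hash)
    (R : Set (List A)) (hR : ∀ w ∈ R, Odd w.length ∧ ∀ c ∈ w, c ≠ hash) :
    (∀ w u : List A, InLang (XR hash R) w → InLang (XR hash R) u →
        ∃ v : List A, v.length = 2 ∧ InLang (XR hash R) (w ++ v ++ u)) ∧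
      HasSpec (XR hash R) := by
  obtain ⟨a, ha⟩ := hA
  constructor
  · intro w u hw hu
    obtain ⟨x, hxX, s, hxw⟩ := hw
    obtain ⟨y, hyX, t, hyu⟩ := hu
    exact glue_main ha hxX hyX w u s t hxw hyu
  · intro ε hε
    obtain ⟨N, hN⟩ := exists_pow_lt_of_lt_one hε (by norm_num : (2 : ℝ)⁻¹ < 1)
    refine ⟨2 * N + 2, fun n x hx aa bb hab hgap => ?_⟩
    obtain ⟨y, hyX, hagree⟩ := spec_glue ha N n x hx aa bb hab hgap
    refine ⟨y, hyX, fun i j hj1 hj2 => ?_⟩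
    have hag : ∀ m : ℤ, m.natAbs ≤ N → (shiftMap^[j] (x i)) m = (shiftMap^[j] y) m := by
      intro m hm
      simp only [shift_iterate]
      exact (hagree i (m + j) (by omega) (by omega)).symm
    calc stdDist (shiftMap^[j] (x i)) (shiftMap^[j] y) ≤ (2 : ℝ)⁻¹ ^ N := stdDist_le_pow hag
      _ ≤ ε := le_of_lt hN
end

section
/- The code B = {a, b, #} with a = 010, b = 011, # = 0 over the alphabet {0,1} is recognizable: for every bi-infinite concatenation of blocks from B, the decomposition into blocks is unique (if x, y ∈ B^ℤ and the flattening of x equals the shift by k of the flattening of y for some 0 ≤ k < |y(0)|, then k = 0 and x = y). -/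
open Function

/-- `p` is the offset (cumulative length) function of the block sequence `x`. -/
def IsOffset (x : ℤ → List Bool) (p : ℤ → ℤ) : Prop :=
  p 0 = 0 ∧ ∀ n : ℤ, p (n + 1) = p n + (x n).length

/-- `y` is the flattening `x_♭` of the block sequence `x`, with offsets `p`:
the blocks of `x` are concatenated, the first letter of `x 0` sitting at position `0`. -/
def IsFlatten (x : ℤ → List Bool) (p : ℤ → ℤ) (y : ℤ → Bool) : Prop :=
  IsOffset x p ∧ ∀ n : ℤ, ∀ j : Fin (x n).length, y (p n + (j.1 : ℤ)) = (x n).get j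

/-- The full block space `B^ℤ`. -/
def SB (B : Set (List Bool)) : Set (ℤ → List Bool) := {x | ∀ n : ℤ, x n ∈ B}

/-- A code `B` is recognizable: the decomposition of a flattened sequence into blocks of `B`
is unique, i.e. if `x_♭ = σ^k (y_♭)` with `0 ≤ k < |y 0|` then `k = 0` and `x = y`. -/
def Recognizable (B : Set (List Bool)) : Prop :=
  ∀ x y : ℤ → List Bool, x ∈ SB B → y ∈ SB B →
    ∀ p q : ℤ → ℤ, ∀ xf yf : ℤ → Bool, IsFlatten x p xf → IsFlatten y q yf →
      ∀ k : ℕ, k < (y 0).length → xf = (fun m => yf (m + (k : ℤ))) → k = 0 ∧ x = y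

namespace Rec5

def B3 : Set (List Bool) :=
  {[false, true, false], [false, true, true], [false]}

lemma mem_cases {x : ℤ → List Bool} (hx : x ∈ SB B3) (n : ℤ) :
    x n = [false, true, false] ∨ x n = [false, true, true] ∨ x n = [false] := hx n

lemma flat_get {x : ℤ → List Bool} {p : ℤ → ℤ} {xf : ℤ → Bool}
    (hf : IsFlatten x p xf) (n : ℤ) (j : ℕ) (hj : j < (x n).length) :
    xf (p n + (j : ℤ)) = (x n).getD j false := by
  have h := hf.2 n ⟨j, hj⟩
  simp only [List.get_eq_getElem] at h
  rw [List.getD_eq_getElem?_getD, List.getElem?_eq_getElem hj, Option.getD_some, ← h]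

lemma len_pos {x : ℤ → List Bool} (hx : x ∈ SB B3) (n : ℤ) :
    1 ≤ ((x n).length : ℤ) := by
  rcases mem_cases hx n with h | h | h <;> simp [h]

lemma p_lower {x : ℤ → List Bool} {p : ℤ → ℤ} (hx : x ∈ SB B3) (hp : IsOffset x p) :
    ∀ n m : ℤ, n ≤ m → p n + (m - n) ≤ p m := by
  intro n m hnm
  refine Int.le_induction (motive := fun m _ => p n + (m - n) ≤ p m) ?_ ?_ m hnm
  · simp
  · intro m hm ih
    have h1 := hp.2 m
    have h2 := len_pos hx m
    omega

lemma p_mono {x : ℤ → List Bool} {p : ℤ → ℤ} (hx : x ∈ SB B3) (hp : IsOffset x p) :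
    ∀ n m : ℤ, n ≤ m → p n ≤ p m := by
  intro n m h
  have := p_lower hx hp n m h
  omega

lemma p_strict {x : ℤ → List Bool} {p : ℤ → ℤ} (hx : x ∈ SB B3) (hp : IsOffset x p) :
    ∀ n m : ℤ, n < m → p n < p m := by
  intro n m h
  have := p_lower hx hp n m (le_of_lt h)
  omega

lemma exists_block {x : ℤ → List Bool} {p : ℤ → ℤ} (hx : x ∈ SB B3) (hp : IsOffset x p)
    (m : ℤ) : ∃ n, p n ≤ m ∧ m < p (n + 1) := by
  obtain ⟨n, hn1, hn2⟩ := Int.exists_greatest_of_bdd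
    (P := fun n => p n ≤ m)
    ⟨max 0 (m - p 0), by
      intro z hz
      rcases le_or_gt z 0 with h | h
      · omega
      · have := p_lower hx hp 0 z (le_of_lt h)
        omega⟩
    ⟨min 0 (m - p 0), by
      have := p_lower hx hp (min 0 (m - p 0)) 0 (min_le_left _ _)
      have h2 : min 0 (m - p 0) ≤ m - p 0 := min_le_right _ _
      omega⟩
  refine ⟨n, hn1, ?_⟩
  by_contra h
  have := hn2 (n + 1) (by omega)
  omega

/-- A position is the start of a block iff the letter there is `0` and either the previous
letter is `0` or the letter two back is `1`. -/
def StartProp (f : ℤ → Bool) (m : ℤ) : Prop :=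
  f m = false ∧ (f (m - 1) = false ∨ f (m - 2) = true)

lemma start_iff {x : ℤ → List Bool} {p : ℤ → ℤ} {xf : ℤ → Bool}
    (hx : x ∈ SB B3) (hf : IsFlatten x p xf) (m : ℤ) :
    (∃ n, p n = m) ↔ StartProp xf m := by
  have hp : IsOffset x p := hf.1
  constructor
  · rintro ⟨n, rfl⟩
    constructor
    · rcases mem_cases hx n with h | h | h <;>
      · have := flat_get hf n 0 (by simp [h])
        rw [h] at this
        simpa using this
    · have hlen : p n = p (n - 1) + ((x (n - 1)).length : ℤ) := by
        have := hp.2 (n - 1)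
        simpa using this
      rcases mem_cases hx (n - 1) with h | h | h
      · left
        have hg := flat_get hf (n - 1) 2 (by simp [h])
        rw [h] at hg
        rw [h] at hlen
        simp at hlen
        have e : p (n - 1) + ((2 : ℕ) : ℤ) = p n - 1 := by push_cast; omega
        rw [e] at hg
        simpa using hg
      · right
        have hg := flat_get hf (n - 1) 1 (by simp [h])
        rw [h] at hg
        rw [h] at hlen
        simp at hlen
        have e : p (n - 1) + ((1 : ℕ) : ℤ) = p n - 2 := by push_cast; omega
        rw [e] at hg
        simpa using hg
      · left
        have hg := flat_get hf (n - 1) 0 (by simp [h])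
        rw [h] at hg
        rw [h] at hlen
        simp at hlen
        have e : p (n - 1) + ((0 : ℕ) : ℤ) = p n - 1 := by push_cast; omega
        rw [e] at hg
        simpa using hg
  · rintro ⟨h0, h12⟩
    obtain ⟨n, hn1, hn2⟩ := exists_block hx hp m
    have hlen : p (n + 1) = p n + ((x n).length : ℤ) := hp.2 n
    refine ⟨n, ?_⟩
    by_contra hne
    have hgt : p n < m := lt_of_le_of_ne hn1 (fun e => hne e)
    rcases mem_cases hx n with h | h | h
    · rw [h] at hlen; simp at hlen
      have hm : m = p n + 1 ∨ m = p n + 2 := by omega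
      rcases hm with rfl | rfl
      · have hg := flat_get hf n 1 (by simp [h])
        rw [h] at hg
        have e : p n + ((1 : ℕ) : ℤ) = p n + 1 := by push_cast; ring
        rw [e] at hg
        simp at hg
        rw [h0] at hg
        exact absurd hg (by simp)
      · -- m = p n + 2, block is 010: positions m-1 has 1, m-2 has 0
        have hg1 := flat_get hf n 1 (by simp [h])
        have hg0 := flat_get hf n 0 (by simp [h])
        rw [h] at hg1 hg0
        have e1 : p n + ((1 : ℕ) : ℤ) = p n + 2 - 1 := by push_cast; ring
        have e0 : p n + ((0 : ℕ) : ℤ) = p n + 2 - 2 := by push_cast; ring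
        rw [e1] at hg1
        rw [e0] at hg0
        simp at hg1 hg0
        rcases h12 with h' | h'
        · rw [h'] at hg1; exact absurd hg1 (by simp)
        · have h'' : xf (p n) = true := by
            have e : p n + 2 - 2 = p n := by ring
            rwa [e] at h'
          rw [hg0] at h''
          simp at h''
    · rw [h] at hlen; simp at hlen
      have hm : m = p n + 1 ∨ m = p n + 2 := by omega
      rcases hm with rfl | rfl
      · have hg := flat_get hf n 1 (by simp [h])
        rw [h] at hg
        have e : p n + ((1 : ℕ) : ℤ) = p n + 1 := by push_cast; ring
        rw [e] at hg
        simp at hg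
        rw [h0] at hg
        exact absurd hg (by simp)
      · have hg := flat_get hf n 2 (by simp [h])
        rw [h] at hg
        have e : p n + ((2 : ℕ) : ℤ) = p n + 2 := by push_cast; ring
        rw [e] at hg
        simp at hg
        rw [h0] at hg
        exact absurd hg (by simp)
    · rw [h] at hlen; simp at hlen
      omega

lemma offsets_eq {x y : ℤ → List Bool} {p q : ℤ → ℤ}
    (hx : x ∈ SB B3) (hy : y ∈ SB B3) (hp : IsOffset x p) (hq : IsOffset y q)
    (hr : ∀ m : ℤ, (∃ n, p n = m) ↔ (∃ n, q n = m)) : p = q := by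
  have key : ∀ n : ℤ, p n = q n → p (n + 1) = q (n + 1) := by
    intro n hn
    obtain ⟨j, hj⟩ := (hr (p (n + 1))).1 ⟨n + 1, rfl⟩
    obtain ⟨i, hi⟩ := (hr (q (n + 1))).2 ⟨n + 1, rfl⟩
    have h1 : q n < q j := by
      rw [hj, ← hn]; exact p_strict hx hp n (n + 1) (by omega)
    have hjn : n < j := by
      by_contra h
      have := p_mono hy hq j n (by omega)
      omega
    have h2 : q (n + 1) ≤ q j := p_mono hy hq (n + 1) j (by omega)
    have h3 : p n < p i := by
      rw [hi, hn]; exact p_strict hy hq n (n + 1) (by omega)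
    have hin : n < i := by
      by_contra h
      have := p_mono hx hp i n (by omega)
      omega
    have h4 : p (n + 1) ≤ p i := p_mono hx hp (n + 1) i (by omega)
    omega
  have key' : ∀ n : ℤ, p n = q n → p (n - 1) = q (n - 1) := by
    intro n hn
    obtain ⟨j, hj⟩ := (hr (p (n - 1))).1 ⟨n - 1, rfl⟩
    obtain ⟨i, hi⟩ := (hr (q (n - 1))).2 ⟨n - 1, rfl⟩
    have h1 : q j < q n := by
      rw [hj, ← hn]; exact p_strict hx hp (n - 1) n (by omega)
    have hjn : j < n := by
      by_contra h
      have := p_mono hy hq n j (by omega)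
      omega
    have h2 : q j ≤ q (n - 1) := p_mono hy hq j (n - 1) (by omega)
    have h3 : p i < p n := by
      rw [hi, hn]; exact p_strict hy hq (n - 1) n (by omega)
    have hin : i < n := by
      by_contra h
      have := p_mono hx hp n i (by omega)
      omega
    have h4 : p i ≤ p (n - 1) := p_mono hx hp i (n - 1) (by omega)
    omega
  funext n
  induction n using Int.induction_on with
  | zero => rw [hp.1, hq.1]
  | succ i ih => exact key i ih
  | pred i ih =>
      have := key' (-(i : ℤ)) ih
      simpa [sub_eq_add_neg, add_comm] using this

end Rec5

/-- The code `{a, b, #}` with `a = 010`, `b = 011`, `# = 0` is recognizable. -/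
theorem stmt5 :
    Recognizable ({[false, true, false], [false, true, true], [false]} : Set (List Bool)) := by
  intro x y hx hy p q xf yf hfx hfy k hk hshift
  have hx' : x ∈ SB Rec5.B3 := hx
  have hy' : y ∈ SB Rec5.B3 := hy
  have hp : IsOffset x p := hfx.1
  have hq : IsOffset y q := hfy.1
  -- transfer of the start property
  have hsp : ∀ m : ℤ, Rec5.StartProp xf m ↔ Rec5.StartProp yf (m + (k : ℤ)) := by
    intro m
    have h1 := congrFun hshift m
    have h2 := congrFun hshift (m - 1)
    have h3 := congrFun hshift (m - 2)
    unfold Rec5.StartProp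
    rw [h1, h2, h3, show m - 1 + (k : ℤ) = m + (k : ℤ) - 1 by ring,
      show m - 2 + (k : ℤ) = m + (k : ℤ) - 2 by ring]
  -- k = 0
  have hk0 : k = 0 := by
    have h0 : Rec5.StartProp xf 0 := (Rec5.start_iff hx' hfx 0).1 ⟨0, hp.1⟩
    have h1 : Rec5.StartProp yf (k : ℤ) := by
      have := (hsp 0).1 h0
      simpa using this
    obtain ⟨n, hn⟩ := (Rec5.start_iff hy' hfy (k : ℤ)).2 h1
    have hq1 : q 1 = ((y 0).length : ℤ) := by
      have := hq.2 0
      rw [hq.1] at this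
      simpa using this
    rcases lt_trichotomy n 0 with h | h | h
    · have := Rec5.p_strict hy' hq n 0 h
      rw [hq.1] at this
      omega
    · rw [h, hq.1] at hn; omega
    · have := Rec5.p_mono hy' hq 1 n (by omega)
      omega
  subst hk0
  have hff : xf = yf := by
    funext m
    have := congrFun hshift m
    simpa using this
  refine ⟨rfl, ?_⟩
  -- equal offset functions
  have hr : ∀ m : ℤ, (∃ n, p n = m) ↔ (∃ n, q n = m) := by
    intro m
    rw [Rec5.start_iff hx' hfx m, Rec5.start_iff hy' hfy m, hff]
  have hpq : p = q := Rec5.offsets_eq hx' hy' hp hq hr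
  -- blocks equal
  funext n
  have hlx : ((x n).length : ℤ) = p (n + 1) - p n := by have := hp.2 n; omega
  have hly : ((y n).length : ℤ) = q (n + 1) - q n := by have := hq.2 n; omega
  have hlen : (x n).length = (y n).length := by
    have : ((x n).length : ℤ) = ((y n).length : ℤ) := by rw [hlx, hly, hpq]
    exact_mod_cast this
  refine List.ext_get hlen ?_
  intro j hj1 hj2
  have g1 := Rec5.flat_get hfx n j hj1
  have g2 := Rec5.flat_get hfy n j hj2
  have e1 : (x n).get ⟨j, hj1⟩ = (x n).getD j false := by
    rw [List.get_eq_getElem, List.getD_eq_getElem?_getD, List.getElem?_eq_getElem hj1,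
      Option.getD_some]
  have e2 : (y n).get ⟨j, hj2⟩ = (y n).getD j false := by
    rw [List.get_eq_getElem, List.getD_eq_getElem?_getD, List.getElem?_eq_getElem hj2,
      Option.getD_some]
  rw [e1, e2, ← g1, ← g2, hff, hpq]
end

section
/- Let B ⊆ {0,1}* be a recognizable code and φ a shift-commuting homeomorphism (automorphism) of B^ℤ that is block-length-preserving, i.e., |x(0)| = |φ(x)(0)| for every x ∈ B^ℤ. Then there exists a unique automorphism φ_♭ of the binary subshift B^ℤ_♭ such that φ(x)_♭ = φ_♭(x_♭) for every x ∈ B^ℤ. -/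
open Function

namespace Aux

/-- the canonical offset function -/
def ofs (x : ℤ → List Bool) : ℤ → ℤ
  | (n : ℕ) => ∑ i ∈ Finset.range n, ((x i).length : ℤ)
  | (Int.negSucc n) => -∑ i ∈ Finset.range (n+1), ((x (Int.negSucc i)).length : ℤ)

lemma ofs_zero (x : ℤ → List Bool) : ofs x 0 = 0 := by simp [ofs]

lemma ofs_succ (x : ℤ → List Bool) (n : ℤ) : ofs x (n + 1) = ofs x n + (x n).length := by
  rcases n with k | k
  · show ofs x ((k+1 : ℕ) : ℤ) = _
    simp [ofs, Finset.sum_range_succ]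
  · rcases k with _ | k
    · show ofs x 0 = ofs x (Int.negSucc 0) + _
      simp [ofs]
    · show ofs x (Int.negSucc k) = ofs x (Int.negSucc (k+1)) + _
      simp only [ofs, Finset.sum_range_succ]
      ring

lemma isOffset_ofs (x : ℤ → List Bool) : IsOffset x (ofs x) :=
  ⟨ofs_zero x, ofs_succ x⟩

lemma offset_eq_ofs {x : ℤ → List Bool} {p : ℤ → ℤ} (h : IsOffset x p) : p = ofs x := by
  funext n
  induction n using Int.induction_on with
  | zero => rw [h.1, ofs_zero]
  | succ k ih => rw [h.2, ih, ofs_succ]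
  | pred k ih =>
      have h1 := h.2 (-(k:ℤ) - 1)
      have h2 := ofs_succ x (-(k:ℤ) - 1)
      simp only [sub_add_cancel] at h1 h2
      omega

/-- good block sequences -/
def Good (x : ℤ → List Bool) : Prop := ∀ n : ℤ, 1 ≤ (x n).length

lemma good_of_mem {B : Set (List Bool)} (hblocks : ∀ w ∈ B, w ≠ []) {x : ℤ → List Bool}
    (hx : x ∈ SB B) : Good x := by
  intro n
  have := hblocks _ (hx n)
  cases h : x n with
  | nil => exact absurd h this
  | cons a l => simp [h]

lemma ofs_add_nat {x : ℤ → List Bool} (hx : Good x) (m : ℤ) (d : ℕ) :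
    ofs x m + d ≤ ofs x (m + d) := by
  induction d with
  | zero => simp
  | succ d ih =>
      have h := ofs_succ x (m + d)
      have := hx (m + d)
      push_cast
      push_cast at ih
      have : (1:ℤ) ≤ (x (m+d)).length := by exact_mod_cast hx (m+d)
      calc ofs x m + (d + 1) ≤ ofs x (m + d) + 1 := by omega
        _ ≤ ofs x (m + d) + (x (m+d)).length := by omega
        _ = ofs x (m + d + 1) := (ofs_succ x _).symm
        _ = ofs x (m + (d + 1)) := by ring_nf

lemma ofs_strictMono {x : ℤ → List Bool} (hx : Good x) : StrictMono (ofs x) := by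
  apply strictMono_int_of_lt_succ
  intro n
  have := ofs_succ x n
  have := hx n
  have : (1:ℤ) ≤ (x n).length := by exact_mod_cast hx n
  omega

lemma le_ofs {x : ℤ → List Bool} (hx : Good x) {n : ℤ} (hn : 0 ≤ n) : n ≤ ofs x n := by
  have := ofs_add_nat hx 0 n.toNat
  rw [ofs_zero] at this
  simp only [zero_add] at this
  rwa [Int.toNat_of_nonneg hn] at this

lemma ofs_le {x : ℤ → List Bool} (hx : Good x) {n : ℤ} (hn : n ≤ 0) : ofs x n ≤ n := by
  have := ofs_add_nat hx n (-n).toNat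
  rw [Int.toNat_of_nonneg (by omega)] at this
  simp only [add_neg_cancel] at this
  rw [ofs_zero] at this
  omega

def Covers (x : ℤ → List Bool) (m n : ℤ) : Prop := ofs x n ≤ m ∧ m < ofs x (n + 1)

lemma exists_covers {x : ℤ → List Bool} (hx : Good x) (m : ℤ) : ∃ n, Covers x m n := by
  obtain ⟨n, hn1, hn2⟩ := Int.exists_greatest_of_bdd (P := fun n => ofs x n ≤ m)
    ⟨max m 0, by
      intro z hz
      rcases le_or_gt z 0 with h | h
      · omega
      · have := le_ofs hx (le_of_lt h) (n := z); omega⟩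
    ⟨-(m.natAbs), by
      have h2 := ofs_le hx (n := -(m.natAbs : ℤ)) (by omega)
      omega⟩
  refine ⟨n, hn1, ?_⟩
  by_contra h
  exact absurd (hn2 (n+1) (by omega)) (by omega)

lemma covers_unique {x : ℤ → List Bool} (hx : Good x) {m n n' : ℤ}
    (h : Covers x m n) (h' : Covers x m n') : n = n' := by
  by_contra hne
  rcases lt_or_gt_of_ne hne with hl | hl
  · have := (ofs_strictMono hx).monotone (show n + 1 ≤ n' by omega)
    obtain ⟨h1, h2⟩ := h; obtain ⟨h3, h4⟩ := h'
    omega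
  · have := (ofs_strictMono hx).monotone (show n' + 1 ≤ n by omega)
    obtain ⟨h1, h2⟩ := h; obtain ⟨h3, h4⟩ := h'
    omega

open Classical in
noncomputable def bidx (x : ℤ → List Bool) (m : ℤ) : ℤ :=
  if h : ∃ n, Covers x m n then h.choose else 0

lemma bidx_covers {x : ℤ → List Bool} (hx : Good x) (m : ℤ) : Covers x m (bidx x m) := by
  rw [bidx, dif_pos (exists_covers hx m)]

  exact (exists_covers hx m).choose_spec

lemma bidx_eq {x : ℤ → List Bool} (hx : Good x) {m n : ℤ} (h : Covers x m n) :
    bidx x m = n := covers_unique hx (bidx_covers hx m) h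

noncomputable def flat (x : ℤ → List Bool) (m : ℤ) : Bool :=
  (x (bidx x m)).getD (m - ofs x (bidx x m)).toNat false

lemma flat_eq {x : ℤ → List Bool} (hx : Good x) {m n : ℤ} (h : Covers x m n) :
    flat x m = (x n).getD (m - ofs x n).toNat false := by
  rw [flat, bidx_eq hx h]

lemma isFlatten_flat {x : ℤ → List Bool} (hx : Good x) : IsFlatten x (ofs x) (flat x) := by
  refine ⟨isOffset_ofs x, ?_⟩
  intro n j
  have hc : Covers x (ofs x n + (j.1 : ℤ)) n := by
    constructor
    · omega
    · rw [ofs_succ]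
      have := j.2
      omega
  rw [flat_eq hx hc]
  have hnat : (ofs x n + (j.1:ℤ) - ofs x n).toNat = j.1 := by omega
  rw [hnat, List.getD_eq_getElem _ _ j.2]
  simp [List.get_eq_getElem]

lemma flatten_unique {x : ℤ → List Bool} (hx : Good x) {p : ℤ → ℤ} {z : ℤ → Bool}
    (h : IsFlatten x p z) : p = ofs x ∧ z = flat x := by
  have hp : p = ofs x := offset_eq_ofs h.1
  refine ⟨hp, ?_⟩
  funext m
  obtain ⟨n, hn⟩ := exists_covers hx m
  have hj : (m - ofs x n).toNat < (x n).length := by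
    have := hn.2; rw [ofs_succ] at this; have := hn.1; omega
  have := h.2 n ⟨(m - ofs x n).toNat, hj⟩
  rw [hp] at this
  have hm : ofs x n + ((m - ofs x n).toNat : ℤ) = m := by have := hn.1; omega
  rw [hm] at this
  rw [this, flat_eq hx hn, List.getD_eq_getElem _ _ hj]
  simp [List.get_eq_getElem]

end Aux


namespace Aux

/-- shift of a block sequence by `n` -/
def shB (n : ℤ) (x : ℤ → List Bool) : ℤ → List Bool := fun m => x (m + n)

lemma good_shB {x : ℤ → List Bool} (hx : Good x) (n : ℤ) : Good (shB n x) :=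
  fun m => hx (m + n)

lemma mem_SB_shB {B : Set (List Bool)} {x : ℤ → List Bool} (hx : x ∈ SB B) (n : ℤ) :
    shB n x ∈ SB B := fun m => hx (m + n)

lemma shB_zero (x : ℤ → List Bool) : shB 0 x = x := by funext m; simp [shB]

lemma ofs_congr {x x' : ℤ → List Bool} (h : ∀ n, (x n).length = (x' n).length) :
    ofs x = ofs x' := by
  have : IsOffset x' (ofs x) := ⟨ofs_zero x, fun n => by rw [ofs_succ, h n]⟩
  exact offset_eq_ofs this

lemma isFlatten_shift {x : ℤ → List Bool} {p : ℤ → ℤ} {z : ℤ → Bool}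
    (h : IsFlatten x p z) (n : ℤ) :
    IsFlatten (shB n x) (fun m => p (m + n) - p n) (fun m => z (m + p n)) := by
  refine ⟨⟨by simp, fun m => ?_⟩, fun m j => ?_⟩
  · show p (m + 1 + n) - p n = p (m + n) - p n + ((x (m + n)).length : ℤ)
    have := h.1.2 (m + n)
    have e : m + 1 + n = m + n + 1 := by ring
    rw [e]
    omega
  · have := h.2 (m + n) j
    have e : p (m + n) - p n + (j.1:ℤ) + p n = p (m + n) + (j.1:ℤ) := by ring
    simpa [shB, e] using this

lemma flat_shB {x : ℤ → List Bool} (hx : Good x) (n : ℤ) :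
    flat (shB n x) = fun m => flat x (m + ofs x n) := by
  have h := isFlatten_shift (isFlatten_flat hx) n
  exact ((flatten_unique (good_shB hx n) h).2).symm

lemma ofs_shB {x : ℤ → List Bool} (hx : Good x) (n : ℤ) :
    ofs (shB n x) = fun m => ofs x (m + n) - ofs x n := by
  have h := isFlatten_shift (isFlatten_flat hx) n
  exact ((flatten_unique (good_shB hx n) h).1).symm

/-- locality of ofs -/
lemma ofs_local {x x' : ℤ → List Bool} {M : ℤ}
    (h : ∀ i, -M ≤ i → i < M → x i = x' i) {n : ℤ} (h1 : -M ≤ n) (h2 : n ≤ M) :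
    ofs x n = ofs x' n := by
  rcases n with k | k
  · simp only [Int.ofNat_eq_coe] at h1 h2
    show ofs x ((k:ℕ):ℤ) = ofs x' ((k:ℕ):ℤ)
    simp only [ofs]
    apply Finset.sum_congr rfl
    intro i hi
    simp only [Finset.mem_range] at hi
    have hik : (i:ℤ) < (k:ℤ) := by exact_mod_cast hi
    rw [h i (by omega) (by omega)]
  · show ofs x (Int.negSucc k) = ofs x' (Int.negSucc k)
    simp only [ofs, neg_inj]
    apply Finset.sum_congr rfl
    intro i hi
    simp only [Finset.mem_range] at hi
    have hn : Int.negSucc k = -((k:ℤ)+1) := by simp [Int.negSucc_eq]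
    have hik : Int.negSucc i = -((i:ℤ)+1) := by simp [Int.negSucc_eq]
    rw [h (Int.negSucc i) (by omega) (by omega)]

/-- the covering block of `m` lies in `[-|m|-1, |m|]` roughly -/
lemma covers_range {x : ℤ → List Bool} (hx : Good x) {m n : ℤ} (h : Covers x m n) :
    (0 ≤ m → 0 ≤ n ∧ n ≤ m) ∧ (m < 0 → m ≤ n ∧ n ≤ -1) := by
  constructor
  · intro hm
    constructor
    · by_contra hn
      push_neg at hn
      have : ofs x (n+1) ≤ n + 1 := ofs_le hx (by omega)
      have := h.2
      omega
    · by_contra hn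
      push_neg at hn
      have : n ≤ ofs x n := le_ofs hx (by omega)
      have := h.1
      omega
  · intro hm
    have hn1 : n ≤ -1 := by
      by_contra hn
      push_neg at hn
      have : 0 ≤ ofs x n := by
        have := le_ofs hx (show (0:ℤ) ≤ n by omega)
        omega
      have := h.1
      omega
    refine ⟨?_, hn1⟩
    have : ofs x (n+1) ≤ n + 1 := ofs_le hx (by omega)
    have := h.2
    omega

/-- locality of flat -/
lemma flat_local {x x' : ℤ → List Bool} (hx : Good x) (hx' : Good x') {M m : ℤ}
    (hM : |m| + 1 ≤ M) (h : ∀ i, -M ≤ i → i ≤ M → x i = x' i) :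
    flat x m = flat x' m := by
  obtain ⟨n, hn⟩ := exists_covers hx m
  have hr := covers_range hx hn
  have hb : -M ≤ n ∧ n + 1 ≤ M := by
    rcases le_or_gt 0 m with hm | hm
    · have := hr.1 hm
      rw [abs_of_nonneg hm] at hM
      omega
    · have := hr.2 hm
      rw [abs_of_neg hm] at hM
      omega
  have hofs : ∀ i, -M ≤ i → i ≤ M → ofs x i = ofs x' i := by
    intro i hi1 hi2
    exact ofs_local (fun j hj1 hj2 => h j hj1 (by omega)) hi1 hi2
  have hn' : Covers x' m n := by
    refine ⟨?_, ?_⟩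
    · rw [← hofs n (by omega) (by omega)]; exact hn.1
    · rw [← hofs (n+1) (by omega) (by omega)]; exact hn.2
  rw [flat_eq hx hn, flat_eq hx' hn', h n (by omega) (by omega),
    hofs n (by omega) (by omega)]

end Aux


namespace Aux

variable {B : Set (List Bool)}

lemma ofs_one (x : ℤ → List Bool) : ofs x 1 = (x 0).length := by
  have := ofs_succ x 0
  rw [ofs_zero] at this
  simpa using this

lemma decomp_unique (hblocks : ∀ w ∈ B, w ≠ []) (hrec : Recognizable B)
    {x x' : ℤ → List Bool} (hx : x ∈ SB B) (hx' : x' ∈ SB B)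
    {k k' : ℤ} (h : (fun m => flat x (m + k)) = (fun m => flat x' (m + k'))) :
    ∃ n : ℤ, x = shB n x' ∧ k' = k + ofs x' n := by
  have gx := good_of_mem hblocks hx
  have gx' := good_of_mem hblocks hx'
  set d := k' - k with hd
  have hmm : ∀ m, flat x m = flat x' (m + d) := by
    intro m
    have h1 := congrFun h (m - k)
    have e1 : m - k + k = m := by ring
    have e2 : m - k + k' = m + d := by rw [hd]; ring
    rw [e1, e2] at h1
    exact h1
  obtain ⟨n, hn⟩ := exists_covers gx' d
  have hr0 : 0 ≤ d - ofs x' n := by have := hn.1; omega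
  have hrlen : d - ofs x' n < ((x' n).length : ℤ) := by
    have := hn.2; rw [ofs_succ] at this; omega
  set r : ℕ := (d - ofs x' n).toNat with hrdef
  have hrr : (r : ℤ) = d - ofs x' n := by omega
  have hclaim : flat x = fun m => flat (shB n x') (m + (r:ℤ)) := by
    funext m
    rw [flat_shB gx' n]
    show flat x m = flat x' (m + (r:ℤ) + ofs x' n)
    rw [show m + (r:ℤ) + ofs x' n = m + d from by omega]
    exact hmm m
  have hlt : r < ((shB n x') 0).length := by
    show r < (x' (0 + n)).length
    rw [zero_add]
    omega
  obtain ⟨hr0', hxy⟩ := hrec x (shB n x') hx (mem_SB_shB hx' n) (ofs x) (ofs (shB n x'))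
    (flat x) (flat (shB n x')) (isFlatten_flat gx) (isFlatten_flat (good_shB gx' n))
    r hlt hclaim
  refine ⟨n, hxy, ?_⟩
  omega

lemma decomp_inj (hblocks : ∀ w ∈ B, w ≠ []) (hrec : Recognizable B)
    {x x' : ℤ → List Bool} (hx : x ∈ SB B) (hx' : x' ∈ SB B)
    {k k' : ℕ} (hk : k < (x 0).length) (hk' : k' < (x' 0).length)
    (h : (fun m => flat x (m + (k:ℤ))) = (fun m => flat x' (m + (k':ℤ)))) :
    x = x' ∧ k = k' := by
  have gx := good_of_mem hblocks hx
  have gx' := good_of_mem hblocks hx'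
  obtain ⟨n, hxe, hke⟩ := decomp_unique hblocks hrec hx hx' h
  obtain ⟨n', hxe', hke'⟩ := decomp_unique hblocks hrec hx' hx h.symm
  have hofs : ofs x = fun m => ofs x' (m + n) - ofs x' n := by
    rw [hxe]; exact ofs_shB gx' n
  have hz : ofs x' (n' + n) = 0 := by
    have h1 := congrFun hofs n'
    omega
  have hnn : n' + n = 0 := by
    have := (ofs_strictMono gx').injective (a₁ := n' + n) (a₂ := 0)
    rw [ofs_zero] at this
    exact this hz
  have hn0 : n = 0 := by
    by_contra hne
    rcases lt_or_gt_of_ne hne with hl | hl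
    · -- n ≤ -1, so n' = -n ≥ 1
      have h1 : ofs x 1 ≤ ofs x n' := (ofs_strictMono gx).monotone (by omega)
      rw [ofs_one] at h1
      omega
    · -- n ≥ 1
      have h1 : ofs x' 1 ≤ ofs x' n := (ofs_strictMono gx').monotone (by omega)
      rw [ofs_one] at h1
      omega
  subst hn0
  rw [shB_zero] at hxe
  rw [ofs_zero] at hke
  exact ⟨hxe, by omega⟩

section Phi

variable {φ : (ℤ → List Bool) → (ℤ → List Bool)}

lemma shiftMap_mem_SB {x : ℤ → List Bool} (hx : x ∈ SB B) : shiftMap x ∈ SB B :=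
  fun n => hx (n + 1)

lemma commZ (hcomm : ∀ x ∈ SB B, φ (shiftMap x) = shiftMap (φ x)) :
    ∀ n : ℤ, ∀ x ∈ SB B, φ (shB n x) = shB n (φ x) := by
  intro n
  induction n using Int.induction_on with
  | zero => intro x hx; rw [shB_zero, shB_zero]
  | succ k ih =>
      intro x hx
      have e : shB ((k:ℤ)+1) x = shiftMap (shB k x) := by
        funext m; exact congrArg x (by ring)
      rw [e, hcomm _ (mem_SB_shB hx k), ih x hx]
      funext m; exact congrArg (φ x) (by ring)
  | pred k ih =>
      intro x hx
      have h1 : shiftMap (shB (-(k:ℤ)-1) x) = shB (-(k:ℤ)) x := by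
        funext m; exact congrArg x (by ring)
      have h2 := hcomm (shB (-(k:ℤ)-1) x) (mem_SB_shB hx _)
      rw [h1, ih x hx] at h2
      -- h2 : shB (-k) (φ x) = shiftMap (φ (shB (-k-1) x))
      funext m
      have h3 := congrFun h2.symm (m - 1)
      -- h3 : shiftMap (φ (shB (-k-1) x)) (m-1) = shB (-k) (φ x) (m-1)
      show φ (shB (-(k:ℤ)-1) x) m = φ x (m + (-(k:ℤ)-1))
      have e1 : m - 1 + 1 = m := by ring
      have e2 : m - 1 + -(k:ℤ) = m + (-(k:ℤ)-1) := by ring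
      rw [shiftMap] at h3
      simp only [shB] at h3 ⊢
      rw [e1, e2] at h3
      exact h3

lemma lenZ (hφmap : Set.MapsTo φ (SB B) (SB B))
    (hcomm : ∀ x ∈ SB B, φ (shiftMap x) = shiftMap (φ x))
    (hlen : ∀ x ∈ SB B, (φ x 0).length = (x 0).length)
    {x : ℤ → List Bool} (hx : x ∈ SB B) (n : ℤ) :
    (φ x n).length = (x n).length := by
  have h := hlen (shB n x) (mem_SB_shB hx n)
  rw [commZ hcomm n x hx] at h
  simp only [shB, zero_add] at h
  exact h

lemma ofs_phi (hφmap : Set.MapsTo φ (SB B) (SB B))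
    (hcomm : ∀ x ∈ SB B, φ (shiftMap x) = shiftMap (φ x))
    (hlen : ∀ x ∈ SB B, (φ x 0).length = (x 0).length)
    {x : ℤ → List Bool} (hx : x ∈ SB B) : ofs (φ x) = ofs x :=
  ofs_congr (lenZ hφmap hcomm hlen hx)

lemma WD (hblocks : ∀ w ∈ B, w ≠ []) (hrec : Recognizable B)
    (hφmap : Set.MapsTo φ (SB B) (SB B))
    (hcomm : ∀ x ∈ SB B, φ (shiftMap x) = shiftMap (φ x))
    (hlen : ∀ x ∈ SB B, (φ x 0).length = (x 0).length)
    {x x' : ℤ → List Bool} (hx : x ∈ SB B) (hx' : x' ∈ SB B)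
    {k k' : ℤ} (h : (fun m => flat x (m + k)) = (fun m => flat x' (m + k'))) :
    (fun m => flat (φ x) (m + k)) = (fun m => flat (φ x') (m + k')) := by
  obtain ⟨n, hxe, hke⟩ := decomp_unique hblocks hrec hx hx' h
  have hφe : φ x = shB n (φ x') := by rw [hxe, commZ hcomm n x' hx']
  have gφx' : Good (φ x') := by
    intro m
    rw [lenZ hφmap hcomm hlen hx' m]
    exact good_of_mem hblocks hx' m
  funext m
  rw [hφe, flat_shB gφx' n, ofs_phi hφmap hcomm hlen hx']
  exact congrArg (flat (φ x')) (by omega)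

end Phi
end Aux


/-- The binary subshift `B^ℤ_♭`: all shifts of flattenings of block sequences from `B^ℤ`. -/
def FlatSet (B : Set (List Bool)) : Set (ℤ → Bool) :=
  {y | ∃ x ∈ SB B, ∃ p : ℤ → ℤ, ∃ z : ℤ → Bool, IsFlatten x p z ∧
        ∃ k : ℤ, y = fun m => z (m + k)}

namespace Aux

variable {B : Set (List Bool)}

lemma mem_FlatSet_iff (hblocks : ∀ w ∈ B, w ≠ []) {y : ℤ → Bool} :
    y ∈ FlatSet B ↔ ∃ x ∈ SB B, ∃ k : ℤ, y = fun m => flat x (m + k) := by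
  constructor
  · rintro ⟨x, hx, p, z, hfl, k, rfl⟩
    refine ⟨x, hx, k, ?_⟩
    rw [(flatten_unique (good_of_mem hblocks hx) hfl).2]
  · rintro ⟨x, hx, k, rfl⟩
    exact ⟨x, hx, ofs x, flat x, isFlatten_flat (good_of_mem hblocks hx), k, rfl⟩

/-- canonical parameter space -/
def ESet (B : Set (List Bool)) : Set ((ℤ → List Bool) × ℕ) :=
  {q | q.1 ∈ SB B ∧ q.2 < (q.1 0).length}

/-- evaluation map -/
noncomputable def emap : (ℤ → List Bool) × ℕ → (ℤ → Bool) := fun q m => flat q.1 (m + q.2)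

lemma flatset_eq_image (hblocks : ∀ w ∈ B, w ≠ []) :
    FlatSet B = emap '' ESet B := by
  ext y
  rw [mem_FlatSet_iff hblocks]
  constructor
  · rintro ⟨x, hx, k, rfl⟩
    have gx := good_of_mem hblocks hx
    obtain ⟨n, hn⟩ := exists_covers gx k
    have hlen : k - ofs x n < ((x n).length : ℤ) := by
      have := hn.2; rw [ofs_succ] at this; omega
    have hr0 : 0 ≤ k - ofs x n := by have := hn.1; omega
    refine ⟨(shB n x, (k - ofs x n).toNat), ⟨mem_SB_shB hx n, ?_⟩, ?_⟩
    · show (k - ofs x n).toNat < (x (0 + n)).length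
      rw [zero_add]; omega
    · funext m
      show flat (shB n x) (m + ((k - ofs x n).toNat : ℤ)) = flat x (m + k)
      rw [flat_shB gx n]
      show flat x (m + ((k - ofs x n).toNat : ℤ) + ofs x n) = flat x (m + k)
      exact congrArg (flat x) (by omega)
  · rintro ⟨⟨x, k⟩, ⟨hx, hk⟩, rfl⟩
    exact ⟨x, hx, (k:ℤ), rfl⟩

lemma emap_injOn (hblocks : ∀ w ∈ B, w ≠ []) (hrec : Recognizable B) :
    Set.InjOn emap (ESet B) := by
  rintro ⟨x, k⟩ ⟨hx, hk⟩ ⟨x', k'⟩ ⟨hx', hk'⟩ h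
  have h' : (fun m => flat x (m + (k:ℤ))) = (fun m => flat x' (m + (k':ℤ))) := h
  obtain ⟨he, hke⟩ := decomp_inj hblocks hrec hx hx' hk hk' h'
  exact Prod.ext he hke

section Phi

variable (B) (φ : (ℤ → List Bool) → (ℤ → List Bool))

open Classical in
noncomputable def Fmap : (ℤ → Bool) → (ℤ → Bool) := fun y =>
  if h : ∃ q : (ℤ → List Bool) × ℤ, q.1 ∈ SB B ∧ y = fun m => flat q.1 (m + q.2)
  then fun m => flat (φ h.choose.1) (m + h.choose.2) else y

variable {B} {φ}
variable (hblocks : ∀ w ∈ B, w ≠ []) (hrec : Recognizable B)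
  (hφmap : Set.MapsTo φ (SB B) (SB B))
  (hcomm : ∀ x ∈ SB B, φ (shiftMap x) = shiftMap (φ x))
  (hlen : ∀ x ∈ SB B, (φ x 0).length = (x 0).length)

include hblocks hrec hφmap hcomm hlen in
lemma Fmap_spec {x : ℤ → List Bool} (hx : x ∈ SB B) (k : ℤ) :
    Fmap B φ (fun m => flat x (m + k)) = fun m => flat (φ x) (m + k) := by
  have hex : ∃ q : (ℤ → List Bool) × ℤ, q.1 ∈ SB B ∧
      (fun m => flat x (m + k)) = fun m => flat q.1 (m + q.2) := ⟨(x, k), hx, rfl⟩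
  rw [Fmap, dif_pos hex]
  obtain ⟨h1, h2⟩ := hex.choose_spec
  exact WD hblocks hrec hφmap hcomm hlen h1 hx h2.symm

include hblocks hrec hφmap hcomm hlen in
lemma Fmap_mapsTo : Set.MapsTo (Fmap B φ) (FlatSet B) (FlatSet B) := by
  intro y hy
  rw [mem_FlatSet_iff hblocks] at hy ⊢
  obtain ⟨x, hx, k, rfl⟩ := hy
  rw [Fmap_spec hblocks hrec hφmap hcomm hlen hx k]
  exact ⟨φ x, hφmap hx, k, rfl⟩

include hblocks hrec hφmap hcomm hlen in
lemma Fmap_shift {y : ℤ → Bool} (hy : y ∈ FlatSet B) :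
    Fmap B φ (shiftMap y) = shiftMap (Fmap B φ y) := by
  rw [mem_FlatSet_iff hblocks] at hy
  obtain ⟨x, hx, k, rfl⟩ := hy
  have e : shiftMap (fun m => flat x (m + k)) = fun m => flat x (m + (k+1)) := by
    funext m; exact congrArg (flat x) (by ring)
  rw [e, Fmap_spec hblocks hrec hφmap hcomm hlen hx (k+1),
    Fmap_spec hblocks hrec hφmap hcomm hlen hx k]
  funext m
  exact congrArg (flat (φ x)) (by ring)

include hblocks hrec hφmap hcomm hlen in
lemma Fmap_compat {x : ℤ → List Bool} (hx : x ∈ SB B) {p : ℤ → ℤ} {z : ℤ → Bool}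
    (hz : IsFlatten x p z) {p' : ℤ → ℤ} {z' : ℤ → Bool} (hz' : IsFlatten (φ x) p' z') :
    Fmap B φ z = z' := by
  have gx := good_of_mem hblocks hx
  have gφx : Good (φ x) := good_of_mem hblocks (hφmap hx)
  have h1 : z = flat x := (flatten_unique gx hz).2
  have h2 : z' = flat (φ x) := (flatten_unique gφx hz').2
  have e : z = fun m => flat x (m + (0:ℤ)) := by
    rw [h1]; funext m; exact congrArg (flat x) (by ring)
  rw [e, Fmap_spec hblocks hrec hφmap hcomm hlen hx 0, h2]
  funext m; exact congrArg (flat (φ x)) (by ring)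

end Phi
end Aux


instance : TopologicalSpace (List Bool) := ⊥

instance : DiscreteTopology (List Bool) := ⟨rfl⟩

namespace Aux

variable {B : Set (List Bool)}

lemma isCompact_SB (hfin : B.Finite) : IsCompact (SB B) := by
  have h : SB B = Set.univ.pi (fun _ : ℤ => B) := by
    ext x; simp [SB, Set.mem_pi]
  rw [h]
  exact isCompact_univ_pi fun _ => hfin.isCompact

lemma cont_flat_coord (hblocks : ∀ w ∈ B, w ≠ []) (m : ℤ) :
    ContinuousOn (fun x => flat x m) (SB B) := by
  intro x₀ hx₀
  set M := |m| + 1 with hM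
  set U : Set (ℤ → List Bool) := {x' | ∀ i ∈ Finset.Icc (-M) M, x' i = x₀ i} with hU
  have hUopen : IsOpen U := by
    have h : U = ⋂ i ∈ Finset.Icc (-M) M, (fun x' : ℤ → List Bool => x' i) ⁻¹' {x₀ i} := by
      ext x'; simp [hU]
    rw [h]
    exact isOpen_biInter_finset fun i _ =>
      (continuous_apply i).isOpen_preimage _ (isOpen_discrete _)
  have hx₀U : x₀ ∈ U := fun i _ => rfl
  have hev : (fun x' => flat x' m) =ᶠ[nhdsWithin x₀ (SB B)] fun _ => flat x₀ m := by
    filter_upwards [Filter.inter_mem (mem_nhdsWithin_of_mem_nhds (hUopen.mem_nhds hx₀U))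
      self_mem_nhdsWithin] with x' hx'
    exact flat_local (good_of_mem hblocks hx'.2) (good_of_mem hblocks hx₀) le_rfl
      (fun i h1 h2 => hx'.1 i (Finset.mem_Icc.2 ⟨h1, h2⟩))
  exact continuousWithinAt_const.congr_of_eventuallyEq hev rfl

lemma cont_emap (hblocks : ∀ w ∈ B, w ≠ []) :
    ContinuousOn emap {q : (ℤ → List Bool) × ℕ | q.1 ∈ SB B} := by
  rw [continuousOn_pi]
  intro m
  rintro ⟨x₀, k₀⟩ hq₀
  have hg : ContinuousWithinAt (fun q : (ℤ → List Bool) × ℕ => flat q.1 (m + (k₀:ℤ)))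
      {q : (ℤ → List Bool) × ℕ | q.1 ∈ SB B} (x₀, k₀) :=
    (cont_flat_coord hblocks (m + (k₀:ℤ)) x₀ hq₀).comp
      (x := (x₀, k₀)) (s := {q : (ℤ → List Bool) × ℕ | q.1 ∈ SB B}) (t := SB B)
      (g := fun x => flat x (m + (k₀:ℤ)))
      continuous_fst.continuousWithinAt (fun q hq => hq)
  have hV : {q : (ℤ → List Bool) × ℕ | q.2 = k₀} ∈ nhds ((x₀, k₀) : (ℤ → List Bool) × ℕ) := by
    have : IsOpen {q : (ℤ → List Bool) × ℕ | q.2 = k₀} :=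
      (isOpen_discrete ({k₀} : Set ℕ)).preimage continuous_snd
    exact this.mem_nhds rfl
  have hev : (fun q : (ℤ → List Bool) × ℕ => emap q m)
      =ᶠ[nhdsWithin ((x₀, k₀) : (ℤ → List Bool) × ℕ) {q | q.1 ∈ SB B}]
      fun q => flat q.1 (m + (k₀:ℤ)) := by
    filter_upwards [mem_nhdsWithin_of_mem_nhds hV] with q hq
    show flat q.1 (m + (q.2:ℤ)) = flat q.1 (m + (k₀:ℤ))
    rw [hq]
  exact hg.congr_of_eventuallyEq hev rfl

lemma isCompact_ESet (hfin : B.Finite) : IsCompact (ESet B) := by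
  obtain ⟨N, hN⟩ : ∃ N : ℕ, ∀ w ∈ B, w.length < N := by
    obtain ⟨N, hN⟩ := (hfin.image List.length).bddAbove
    exact ⟨N + 1, fun w hw => by
      have := hN (Set.mem_image_of_mem List.length hw); omega⟩
  have h : ESet B = ⋃ k ∈ Finset.range N,
      ((SB B ∩ {x | k < (x 0).length}) ×ˢ ({k} : Set ℕ)) := by
    ext ⟨x, k⟩
    simp only [ESet, Set.mem_setOf_eq, Set.mem_iUnion, Finset.mem_range, Set.mem_prod,
      Set.mem_inter_iff, Set.mem_singleton_iff]
    constructor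
    · rintro ⟨hx, hk⟩
      exact ⟨k, lt_of_lt_of_le hk (le_of_lt (hN _ (hx 0))), ⟨hx, hk⟩, rfl⟩
    · rintro ⟨k', _, ⟨hx, hk⟩, rfl⟩
      exact ⟨hx, hk⟩
  rw [h]
  apply Set.Finite.isCompact_biUnion (Finset.range N).finite_toSet
  intro k _
  apply IsCompact.prod
  · apply (isCompact_SB hfin).inter_right
    have : {x : ℤ → List Bool | k < (x 0).length} =
        (fun x : ℤ → List Bool => x 0) ⁻¹' {w | k < w.length} := rfl
    rw [this]
    exact (isClosed_discrete _).preimage (continuous_apply 0)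
  · exact isCompact_singleton

section Phi

variable {φ : (ℤ → List Bool) → (ℤ → List Bool)}
variable (hfin : B.Finite) (hblocks : ∀ w ∈ B, w ≠ []) (hrec : Recognizable B)
  (hφmap : Set.MapsTo φ (SB B) (SB B)) (hφc : ContinuousOn φ (SB B))
  (hcomm : ∀ x ∈ SB B, φ (shiftMap x) = shiftMap (φ x))
  (hlen : ∀ x ∈ SB B, (φ x 0).length = (x 0).length)

include hfin hblocks hrec hφmap hφc hcomm hlen in
lemma cont_Fmap : ContinuousOn (Fmap B φ) (FlatSet B) := by
  classical
  have hmt : Set.MapsTo emap (ESet B) (FlatSet B) := by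
    rw [flatset_eq_image hblocks]
    exact Set.mapsTo_image emap (ESet B)
  have hsurj : Set.SurjOn emap (ESet B) (FlatSet B) := by
    rw [flatset_eq_image hblocks]
    exact Set.Subset.rfl
  have hinj := emap_injOn hblocks hrec
  haveI : CompactSpace (ESet B) := isCompact_iff_compactSpace.1 (isCompact_ESet hfin)
  set e0 : ESet B → FlatSet B := fun q => ⟨emap q.1, hmt q.2⟩ with he0
  have he0bij : Function.Bijective e0 := by
    constructor
    · intro a b hab
      exact Subtype.ext (hinj a.2 b.2 (congrArg Subtype.val hab))
    · intro y
      obtain ⟨q, hq, hqe⟩ := hsurj y.2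
      exact ⟨⟨q, hq⟩, Subtype.ext hqe⟩
  set e1 : ESet B ≃ FlatSet B := Equiv.ofBijective e0 he0bij with he1
  have hcr : Continuous ((ESet B).restrict emap) :=
    continuousOn_iff_continuous_restrict.1 ((cont_emap hblocks).mono (fun q hq => hq.1))
  have hce : Continuous e0 := hcr.subtype_mk _
  have hce1 : Continuous ⇑e1 := hce
  set h : ESet B ≃ₜ FlatSet B := hce1.homeoOfEquivCompactToT2 with hh
  have hkey : ∀ y : FlatSet B, emap (h.symm y).1 = (y : ℤ → Bool) := by
    intro y
    have := h.apply_symm_apply y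
    exact congrArg Subtype.val this
  -- the φ-side evaluation map
  have hcφside : Continuous fun q : ESet B => emap (φ q.1.1, q.1.2) := by
    have hco : ContinuousOn (fun q : (ℤ → List Bool) × ℕ => emap (φ q.1, q.2)) (ESet B) := by
      apply ContinuousOn.comp (cont_emap hblocks)
        (f := fun q : (ℤ → List Bool) × ℕ => (φ q.1, q.2))
      · exact ContinuousOn.prodMk
          (hφc.comp continuousOn_fst (fun q (hq : q ∈ ESet B) => hq.1))
          continuousOn_snd
      · intro q hq
        exact hφmap hq.1
    exact continuousOn_iff_continuous_restrict.1 hco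
  rw [continuousOn_iff_continuous_restrict]
  have heq : (FlatSet B).restrict (Fmap B φ) =
      (fun q : ESet B => emap (φ q.1.1, q.1.2)) ∘ h.symm := by
    funext y
    have hk := hkey y
    show Fmap B φ y.1 = emap (φ (h.symm y).1.1, (h.symm y).1.2)
    have hy1 : (y : ℤ → Bool) =
        fun m => flat (h.symm y).1.1 (m + ((h.symm y).1.2 : ℤ)) := hk.symm
    rw [hy1, Fmap_spec hblocks hrec hφmap hcomm hlen (h.symm y).2.1 ((h.symm y).1.2 : ℤ)]
    rfl
  rw [show (FlatSet B).domRestrict (Fmap B φ) = _ from heq]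
  exact hcφside.comp h.symm.continuous

end Phi
end Aux


/-- `F` is an automorphism of the subshift `B^ℤ_♭` compatible with the block-level
automorphism `φ` of `B^ℤ` via flattening. -/
def IsFlatAut (B : Set (List Bool)) (φ : (ℤ → List Bool) → (ℤ → List Bool))
    (F : (ℤ → Bool) → (ℤ → Bool)) : Prop :=
  Set.MapsTo F (FlatSet B) (FlatSet B) ∧
  (∃ G : (ℤ → Bool) → (ℤ → Bool), Set.MapsTo G (FlatSet B) (FlatSet B) ∧
      Set.EqOn (G ∘ F) id (FlatSet B) ∧ Set.EqOn (F ∘ G) id (FlatSet B) ∧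
      ContinuousOn G (FlatSet B)) ∧
  ContinuousOn F (FlatSet B) ∧
  (∀ y ∈ FlatSet B, F (shiftMap y) = shiftMap (F y)) ∧
  (∀ x ∈ SB B, ∀ p z, IsFlatten x p z → ∀ p' z', IsFlatten (φ x) p' z' → F z = z')

/-- A block-length-preserving automorphism of `B^ℤ` induces a unique automorphism of the
binary subshift `B^ℤ_♭` compatible with flattening. -/
theorem stmt6 (B : Set (List Bool)) (hfin : B.Finite) (hblocks : ∀ w ∈ B, w ≠ [])
    (hrec : Recognizable B)
    (φ ψ : (ℤ → List Bool) → (ℤ → List Bool))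
    (hφmap : Set.MapsTo φ (SB B) (SB B)) (hψmap : Set.MapsTo ψ (SB B) (SB B))
    (hinv1 : Set.EqOn (ψ ∘ φ) id (SB B)) (hinv2 : Set.EqOn (φ ∘ ψ) id (SB B))
    (hφc : ContinuousOn φ (SB B)) (hψc : ContinuousOn ψ (SB B))
    (hcomm : ∀ x ∈ SB B, φ (shiftMap x) = shiftMap (φ x))
    (hlen : ∀ x ∈ SB B, (φ x 0).length = (x 0).length) :
    ∃ F : (ℤ → Bool) → (ℤ → Bool), IsFlatAut B φ F ∧
      ∀ F' : (ℤ → Bool) → (ℤ → Bool), IsFlatAut B φ F' → Set.EqOn F' F (FlatSet B) := by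
  
  classical
  -- derived properties of ψ
  have hψlen : ∀ y ∈ SB B, (ψ y 0).length = (y 0).length := by
    intro y hy
    have h := hlen (ψ y) (hψmap hy)
    have h2 : φ (ψ y) = y := hinv2 hy
    rw [h2] at h
    exact h.symm
  have hφinj : ∀ a ∈ SB B, ∀ b ∈ SB B, φ a = φ b → a = b := by
    intro a ha b hb hab
    have h1 : ψ (φ a) = a := hinv1 ha
    have h2 : ψ (φ b) = b := hinv1 hb
    rw [← h1, ← h2, hab]
  have hψcomm : ∀ y ∈ SB B, ψ (shiftMap y) = shiftMap (ψ y) := by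
    intro y hy
    apply hφinj _ (hψmap (Aux.shiftMap_mem_SB hy)) _ (Aux.shiftMap_mem_SB (hψmap hy))
    have h1 : φ (ψ (shiftMap y)) = shiftMap y := hinv2 (Aux.shiftMap_mem_SB hy)
    have h2 : φ (ψ y) = y := hinv2 hy
    rw [h1, hcomm (ψ y) (hψmap hy), h2]
  set F := Aux.Fmap B φ with hF
  set G := Aux.Fmap B ψ with hG
  have hFmaps := Aux.Fmap_mapsTo hblocks hrec hφmap hcomm hlen
  have hGmaps := Aux.Fmap_mapsTo hblocks hrec hψmap hψcomm hψlen
  refine ⟨F, ⟨hFmaps, ⟨G, hGmaps, ?_, ?_, ?_⟩, ?_, ?_, ?_⟩, ?_⟩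
  · -- G ∘ F = id
    intro y hy
    rw [Aux.mem_FlatSet_iff hblocks] at hy
    obtain ⟨x, hx, k, rfl⟩ := hy
    show G (F _) = _
    rw [hF, Aux.Fmap_spec hblocks hrec hφmap hcomm hlen hx k,
      hG, Aux.Fmap_spec hblocks hrec hψmap hψcomm hψlen (hφmap hx) k]
    have : ψ (φ x) = x := hinv1 hx
    rw [this]
    rfl
  · -- F ∘ G = id
    intro y hy
    rw [Aux.mem_FlatSet_iff hblocks] at hy
    obtain ⟨x, hx, k, rfl⟩ := hy
    show F (G _) = _
    rw [hG, Aux.Fmap_spec hblocks hrec hψmap hψcomm hψlen hx k,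
      hF, Aux.Fmap_spec hblocks hrec hφmap hcomm hlen (hψmap hx) k]
    have : φ (ψ x) = x := hinv2 hx
    rw [this]
    rfl
  · exact Aux.cont_Fmap hfin hblocks hrec hψmap hψc hψcomm hψlen
  · exact Aux.cont_Fmap hfin hblocks hrec hφmap hφc hcomm hlen
  · exact fun y hy => Aux.Fmap_shift hblocks hrec hφmap hcomm hlen hy
  · exact fun x hx p z hz p' z' hz' =>
      Aux.Fmap_compat hblocks hrec hφmap hcomm hlen hx hz hz'
  · -- uniqueness
    intro F' hF' y hy
    rw [Aux.flatset_eq_image hblocks] at hy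
    obtain ⟨⟨x, k⟩, ⟨hx, hk⟩, rfl⟩ := hy
    have key : ∀ k : ℕ, ∀ x ∈ SB B,
        F' (fun m => Aux.flat x (m + (k:ℤ))) = fun m => Aux.flat (φ x) (m + (k:ℤ)) := by
      intro k
      induction k with
      | zero =>
          intro x hx
          have gx := Aux.good_of_mem hblocks hx
          have gφx := Aux.good_of_mem hblocks (hφmap hx)
          have e1 : (fun m => Aux.flat x (m + ((0:ℕ):ℤ))) = Aux.flat x := by
            funext m; exact congrArg (Aux.flat x) (by push_cast; ring)
          have e2 : (fun m => Aux.flat (φ x) (m + ((0:ℕ):ℤ))) = Aux.flat (φ x) := by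
            funext m; exact congrArg (Aux.flat (φ x)) (by push_cast; ring)
          rw [e1, e2]
          exact hF'.2.2.2.2 x hx (Aux.ofs x) (Aux.flat x) (Aux.isFlatten_flat gx)
            (Aux.ofs (φ x)) (Aux.flat (φ x)) (Aux.isFlatten_flat gφx)
      | succ k ih =>
          intro x hx
          have hw : (fun m => Aux.flat x (m + (k:ℤ))) ∈ FlatSet B :=
            (Aux.mem_FlatSet_iff hblocks).2 ⟨x, hx, (k:ℤ), rfl⟩
          have e1 : (fun m => Aux.flat x (m + ((k+1:ℕ):ℤ))) =
              shiftMap (fun m => Aux.flat x (m + (k:ℤ))) := by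
            funext m; exact congrArg (Aux.flat x) (by push_cast; ring)
          rw [e1, hF'.2.2.2.1 _ hw, ih x hx]
          funext m; exact congrArg (Aux.flat (φ x)) (by push_cast; ring)
    show F' (Aux.emap (x, k)) = F (Aux.emap (x, k))
    have he : Aux.emap (x, k) = fun m => Aux.flat x (m + (k:ℤ)) := rfl
    rw [he, key k x hx, hF, Aux.Fmap_spec hblocks hrec hφmap hcomm hlen hx (k:ℤ)]
end

section
/- Let B be a finite recognizable code over {0,1} such that all block lengths are divisible by some q ≥ 2. Then the binary subshift B^ℤ_♭ admits a factor map onto the periodic orbit of size q (the cyclic rotation on ℤ/qℤ), and consequently B^ℤ_♭ does not have the specification property. -/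
open Function

def Pfun (x : ℤ → List Bool) (n : ℤ) : ℤ :=
  (∑ i ∈ Finset.range n.toNat, ((x i).length : ℤ)) -
    ∑ i ∈ Finset.range (-n).toNat, ((x (-(i : ℤ) - 1)).length : ℤ)

lemma Pfun_zero (x : ℤ → List Bool) : Pfun x 0 = 0 := by simp [Pfun]

lemma Pfun_succ (x : ℤ → List Bool) (n : ℤ) :
    Pfun x (n + 1) = Pfun x n + (x n).length := by
  rcases le_or_gt 0 n with h | h
  · unfold Pfun
    rw [show (n + 1).toNat = n.toNat + 1 by omega,
      show (-(n + 1)).toNat = 0 by omega, show (-n).toNat = 0 by omega,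
      Finset.sum_range_succ, show ((n.toNat : ℤ)) = n by omega]
    simp
  · unfold Pfun
    rw [show (n + 1).toNat = 0 by omega, show n.toNat = 0 by omega,
      show (-n).toNat = (-(n + 1)).toNat + 1 by omega,
      Finset.sum_range_succ, show -(((-(n + 1)).toNat : ℤ)) - 1 = n by omega]
    simp

lemma isOffset_Pfun (x : ℤ → List Bool) : IsOffset x (Pfun x) :=
  ⟨Pfun_zero x, Pfun_succ x⟩

lemma offset_unique {x : ℤ → List Bool} {p : ℤ → ℤ} (h : IsOffset x p) : p = Pfun x := by
  funext n
  induction n using Int.induction_on with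
  | zero => rw [h.1, Pfun_zero]
  | succ n ih => rw [h.2, Pfun_succ, ih]
  | pred n ih =>
      have h1 := h.2 (-(n:ℤ) - 1)
      have h2 := Pfun_succ x (-(n:ℤ) - 1)
      have e : (-(n:ℤ) - 1) + 1 = -(n:ℤ) := by ring
      rw [e] at h1 h2
      omega

lemma Pfun_gap {x : ℤ → List Bool} (hpos : ∀ n, x n ≠ []) :
    ∀ n m : ℤ, n ≤ m → Pfun x n + (m - n) ≤ Pfun x m := by
  intro n m hnm
  refine Int.le_induction (motive := fun m _ => Pfun x n + (m - n) ≤ Pfun x m) ?_ ?_ m hnm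
  · omega
  · intro m hm ih
    have := Pfun_succ x m
    have hl : 1 ≤ ((x m).length : ℤ) := by
      have := List.length_pos_iff.2 (hpos m); omega
    omega

lemma Pfun_le_self {x : ℤ → List Bool} (hpos : ∀ n, x n ≠ []) {n : ℤ} (hn : n ≤ 0) :
    Pfun x n ≤ n := by
  have := Pfun_gap hpos n 0 hn
  rw [Pfun_zero] at this; omega

lemma self_le_Pfun {x : ℤ → List Bool} (hpos : ∀ n, x n ≠ []) {n : ℤ} (hn : 0 ≤ n) :
    n ≤ Pfun x n := by
  have := Pfun_gap hpos 0 n hn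
  rw [Pfun_zero] at this; omega

lemma block_exists {x : ℤ → List Bool} (hpos : ∀ n, x n ≠ []) (m : ℤ) :
    ∃ n : ℤ, -((m.natAbs : ℤ) + 1) ≤ n ∧ n ≤ (m.natAbs : ℤ) + 1 ∧
      Pfun x n ≤ m ∧ m < Pfun x (n + 1) := by
  set a : ℤ := -((m.natAbs : ℤ) + 1) with ha
  set b : ℤ := (m.natAbs : ℤ) + 1 with hb
  have hab : a ≤ b := by omega
  have hPa : Pfun x a ≤ m := by
    have := Pfun_le_self hpos (n := a) (by omega); omega
  have hPb : m < Pfun x b := by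
    have := self_le_Pfun hpos (n := b) (by omega); omega
  have main : ∀ c : ℤ, a ≤ c → m < Pfun x c →
      ∃ n : ℤ, a ≤ n ∧ n + 1 ≤ c ∧ Pfun x n ≤ m ∧ m < Pfun x (n + 1) := by
    intro c hc
    refine Int.le_induction
      (motive := fun c _ => m < Pfun x c →
        ∃ n : ℤ, a ≤ n ∧ n + 1 ≤ c ∧ Pfun x n ≤ m ∧ m < Pfun x (n + 1)) ?_ ?_ c hc
    · intro h; omega
    · intro c hc ih h
      rcases le_or_gt (Pfun x c) m with h1 | h1
      · exact ⟨c, hc, le_rfl, h1, h⟩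
      · obtain ⟨n, h2, h3, h4, h5⟩ := ih h1
        exact ⟨n, h2, by omega, h4, h5⟩
  obtain ⟨n, h1, h2, h3, h4⟩ := main b hab hPb
  exact ⟨n, h1, by omega, h3, h4⟩

lemma block_unique {x : ℤ → List Bool} (hpos : ∀ n, x n ≠ []) {m n n' : ℤ}
    (h1 : Pfun x n ≤ m) (h2 : m < Pfun x (n + 1))
    (h3 : Pfun x n' ≤ m) (h4 : m < Pfun x (n' + 1)) : n = n' := by
  by_contra hne
  rcases lt_or_gt_of_ne hne with h | h
  · have := Pfun_gap hpos (n + 1) n' (by omega); omega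
  · have := Pfun_gap hpos (n' + 1) n (by omega); omega

/-- index of the block containing position `m` -/
noncomputable def blockIdx (x : ℤ → List Bool) (m : ℤ) : ℤ :=
  let s := (Finset.Icc (-((m.natAbs : ℤ) + 1)) ((m.natAbs : ℤ) + 1)).filter
    (fun n => Pfun x n ≤ m ∧ m < Pfun x (n + 1))
  if h : s.Nonempty then s.min' h else 0

lemma blockIdx_eq {x : ℤ → List Bool} (hpos : ∀ n, x n ≠ []) {m n : ℤ}
    (h1 : Pfun x n ≤ m) (h2 : m < Pfun x (n + 1)) : blockIdx x m = n := by
  obtain ⟨n', g1, g2, g3, g4⟩ := block_exists hpos m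
  have hn : n = n' := block_unique hpos h1 h2 g3 g4
  subst hn
  unfold blockIdx
  set s := (Finset.Icc (-((m.natAbs : ℤ) + 1)) ((m.natAbs : ℤ) + 1)).filter
    (fun n => Pfun x n ≤ m ∧ m < Pfun x (n + 1)) with hs
  have hmem : n ∈ s := by
    rw [hs, Finset.mem_filter, Finset.mem_Icc]
    exact ⟨⟨g1, g2⟩, h1, h2⟩
  have hne : s.Nonempty := ⟨n, hmem⟩
  simp only [hne, dif_pos]
  have hprop : ∀ a ∈ s, Pfun x a ≤ m ∧ m < Pfun x (a + 1) := by
    intro a haa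
    rw [hs, Finset.mem_filter] at haa
    exact haa.2
  have := hprop _ (Finset.min'_mem s hne)
  exact block_unique hpos this.1 this.2 h1 h2

lemma blockIdx_spec {x : ℤ → List Bool} (hpos : ∀ n, x n ≠ []) (m : ℤ) :
    Pfun x (blockIdx x m) ≤ m ∧ m < Pfun x (blockIdx x m + 1) := by
  obtain ⟨n, _, _, h3, h4⟩ := block_exists hpos m
  rw [blockIdx_eq hpos h3 h4]
  exact ⟨h3, h4⟩

/-- canonical flattening -/
noncomputable def Ffun (x : ℤ → List Bool) (m : ℤ) : Bool :=
  (x (blockIdx x m)).getD (m - Pfun x (blockIdx x m)).toNat false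

lemma Ffun_block {x : ℤ → List Bool} (hpos : ∀ n, x n ≠ []) (n : ℤ)
    (j : Fin (x n).length) : Ffun x (Pfun x n + (j.1 : ℤ)) = (x n).get j := by
  set m := Pfun x n + (j.1 : ℤ) with hm
  have h1 : Pfun x n ≤ m := by omega
  have h2 : m < Pfun x (n + 1) := by
    have := Pfun_succ x n
    have := j.2
    omega
  unfold Ffun
  rw [blockIdx_eq hpos h1 h2]
  have : (m - Pfun x n).toNat = j.1 := by omega
  rw [this, List.getD_eq_getElem _ _ j.2]
  rfl

lemma isFlatten_Ffun {x : ℤ → List Bool} (hpos : ∀ n, x n ≠ []) :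
    IsFlatten x (Pfun x) (Ffun x) :=
  ⟨isOffset_Pfun x, fun n j => Ffun_block hpos n j⟩

lemma flatten_unique {x : ℤ → List Bool} (hpos : ∀ n, x n ≠ []) {p : ℤ → ℤ}
    {z : ℤ → Bool} (h : IsFlatten x p z) : p = Pfun x ∧ z = Ffun x := by
  have hp : p = Pfun x := offset_unique h.1
  refine ⟨hp, funext fun m => ?_⟩
  obtain ⟨n, _, _, h3, h4⟩ := block_exists hpos m
  have hj : (m - Pfun x n).toNat < (x n).length := by
    have := Pfun_succ x n; omega
  have e1 := h.2 n ⟨(m - Pfun x n).toNat, hj⟩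
  have e2 := Ffun_block hpos n ⟨(m - Pfun x n).toNat, hj⟩
  rw [hp] at e1
  have em : Pfun x n + (((m - Pfun x n).toNat : ℤ)) = m := by omega
  rw [em] at e1 e2
  rw [e1, e2]

lemma Pfun_congr {x x' : ℤ → List Bool} {M : ℕ}
    (h : ∀ i : ℤ, i.natAbs ≤ M → x i = x' i) {n : ℤ}
    (hn1 : -(M : ℤ) ≤ n) (hn2 : n ≤ (M : ℤ) + 1) :
    Pfun x n = Pfun x' n := by
  unfold Pfun
  congr 1
  · refine Finset.sum_congr rfl fun i hi => ?_
    rw [Finset.mem_range] at hi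
    rw [h i (by rw [Int.natAbs_natCast]; omega)]
  · refine Finset.sum_congr rfl fun i hi => ?_
    rw [Finset.mem_range] at hi
    have h1 : ((-(i : ℤ) - 1)).natAbs ≤ M := by
      rw [show (-(i : ℤ) - 1) = -(((i + 1 : ℕ) : ℤ)) by push_cast; ring,
        Int.natAbs_neg, Int.natAbs_natCast]
      omega
    rw [h (-(i : ℤ) - 1) h1]

lemma Ffun_congr {x x' : ℤ → List Bool} {m : ℤ}
    (h : ∀ i : ℤ, i.natAbs ≤ m.natAbs + 1 → x i = x' i) : Ffun x m = Ffun x' m := by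
  have hP : ∀ n : ℤ, -((m.natAbs : ℤ) + 1) ≤ n → n ≤ (m.natAbs : ℤ) + 2 →
      Pfun x n = Pfun x' n := by
    intro n hn1 hn2
    exact Pfun_congr (M := m.natAbs + 1) h (by omega) (by omega)
  have hb : blockIdx x m = blockIdx x' m := by
    unfold blockIdx
    have hfil : (Finset.Icc (-((m.natAbs : ℤ) + 1)) ((m.natAbs : ℤ) + 1)).filter
        (fun n => Pfun x n ≤ m ∧ m < Pfun x (n + 1)) =
        (Finset.Icc (-((m.natAbs : ℤ) + 1)) ((m.natAbs : ℤ) + 1)).filter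
        (fun n => Pfun x' n ≤ m ∧ m < Pfun x' (n + 1)) := by
      refine Finset.filter_congr fun n hn => ?_
      rw [Finset.mem_Icc] at hn
      rw [hP n (by omega) (by omega), hP (n + 1) (by omega) (by omega)]
    simp only [hfil]
  have hbr : (blockIdx x' m).natAbs ≤ m.natAbs + 1 := by
    unfold blockIdx
    set s := (Finset.Icc (-((m.natAbs : ℤ) + 1)) ((m.natAbs : ℤ) + 1)).filter
      (fun n => Pfun x' n ≤ m ∧ m < Pfun x' (n + 1)) with hs
    by_cases hne : s.Nonempty
    · simp only [hne, dif_pos]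
      have hsub : ∀ a ∈ s, a.natAbs ≤ m.natAbs + 1 := by
        intro a haa
        rw [hs, Finset.mem_filter, Finset.mem_Icc] at haa
        omega
      exact hsub _ (Finset.min'_mem s hne)
    · rw [dif_neg hne]
      simp
  unfold Ffun
  have hbr2 : -((m.natAbs : ℤ) + 1) ≤ blockIdx x' m ∧ blockIdx x' m ≤ (m.natAbs : ℤ) + 1 := by omega
  rw [hb, h _ (by omega), hP _ (by omega) (by omega)]

instance inst_s7 : TopologicalSpace (List Bool) := ⊥
instance inst_s7_2 : DiscreteTopology (List Bool) := ⟨rfl⟩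

lemma continuous_Ffun_pair (m : ℤ) :
    Continuous (fun p : (ℤ → List Bool) × ℕ => Ffun p.1 (m + (p.2 : ℤ))) := by
  rw [continuous_iff_continuousAt]
  rintro ⟨x₀, j₀⟩
  set M : ℕ := (m + (j₀ : ℤ)).natAbs + 1 with hM
  set U : Set ((ℤ → List Bool) × ℕ) :=
    (Set.pi (↑(Finset.Icc (-(M : ℤ)) (M : ℤ)) : Set ℤ) (fun i => {x₀ i})) ×ˢ ({j₀} : Set ℕ)
    with hU
  have hUopen : IsOpen U := by
    refine IsOpen.prod ?_ (isOpen_discrete _)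
    exact isOpen_set_pi (Finset.finite_toSet _) (fun i _ => isOpen_discrete _)
  have hUmem : (x₀, j₀) ∈ U := by
    constructor
    · intro i _; rfl
    · rfl
  have hconst : ∀ p ∈ U, Ffun p.1 (m + (p.2 : ℤ)) = Ffun x₀ (m + (j₀ : ℤ)) := by
    rintro ⟨x, j⟩ ⟨hx, hj⟩
    have hj' : j = j₀ := hj
    subst hj'
    refine Ffun_congr fun i hi => ?_
    refine hx i ?_
    simp only [Finset.coe_Icc, Set.mem_Icc]
    omega
  have : ContinuousAt (fun p : (ℤ → List Bool) × ℕ => Ffun p.1 (m + (p.2 : ℤ))) (x₀, j₀) := by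
    unfold ContinuousAt
    refine Filter.Tendsto.congr' ?_ tendsto_const_nhds
    exact Filter.eventuallyEq_of_mem (hUopen.mem_nhds hUmem) (fun p hp => (hconst p hp).symm)
  exact this

lemma continuous_Psi :
    Continuous (fun p : (ℤ → List Bool) × ℕ => (fun m : ℤ => Ffun p.1 (m + (p.2 : ℤ)))) := by
  refine continuous_pi fun m => continuous_Ffun_pair m

lemma SB_closed (B : Set (List Bool)) : IsClosed (SB B) := by
  have : SB B = Set.pi Set.univ (fun _ : ℤ => B) := by
    ext x; simp [SB, Set.mem_pi]
  rw [this]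
  exact isClosed_set_pi (fun i _ => isClosed_discrete B)

lemma SB_compact {B : Set (List Bool)} (hfin : B.Finite) : IsCompact (SB B) := by
  have : SB B = Set.pi Set.univ (fun _ : ℤ => B) := by
    ext x; simp [SB, Set.mem_pi]
  rw [this]
  exact isCompact_univ_pi (fun i => hfin.isCompact)

lemma isFlatten_shift {x' : ℤ → List Bool} (hpos : ∀ n, x' n ≠ []) (n₀ : ℤ) :
    IsFlatten (fun n => x' (n + n₀)) (fun n => Pfun x' (n + n₀) - Pfun x' n₀)
      (fun m => Ffun x' (m + Pfun x' n₀)) := by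
  refine ⟨⟨?_, fun n => ?_⟩, fun n j => ?_⟩
  · show Pfun x' (0 + n₀) - Pfun x' n₀ = 0
    rw [zero_add, sub_self]
  · show Pfun x' (n + 1 + n₀) - Pfun x' n₀ =
      (Pfun x' (n + n₀) - Pfun x' n₀) + ((x' (n + n₀)).length : ℤ)
    have := Pfun_succ x' (n + n₀)
    rw [show n + 1 + n₀ = (n + n₀) + 1 by ring]
    omega
  · show Ffun x' ((Pfun x' (n + n₀) - Pfun x' n₀ + (j.1 : ℤ)) + Pfun x' n₀) = _
    rw [show (Pfun x' (n + n₀) - Pfun x' n₀ + (j.1 : ℤ)) + Pfun x' n₀ =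
      Pfun x' (n + n₀) + (j.1 : ℤ) by ring]
    exact Ffun_block hpos (n + n₀) j

section Main
variable {B : Set (List Bool)} (hblocks : ∀ w ∈ B, w ≠ []) (hrec : Recognizable B)
  {q : ℕ} (hdiv : ∀ w ∈ B, q ∣ w.length)

include hblocks in
lemma SB_pos {x : ℤ → List Bool} (hx : x ∈ SB B) : ∀ n, x n ≠ [] :=
  fun n => hblocks _ (hx n)

include hdiv in
lemma q_dvd_Pfun {x : ℤ → List Bool} (hx : x ∈ SB B) (n : ℤ) : (q : ℤ) ∣ Pfun x n := by
  induction n using Int.induction_on with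
  | zero => rw [Pfun_zero]; exact dvd_zero _
  | succ n ih =>
      rw [Pfun_succ]
      exact dvd_add ih (Int.natCast_dvd_natCast.2 (hdiv _ (hx n)))
  | pred n ih =>
      have h := Pfun_succ x (-(n : ℤ) - 1)
      rw [show (-(n : ℤ) - 1) + 1 = -(n : ℤ) by ring] at h
      have hd : (q : ℤ) ∣ ((x (-(n : ℤ) - 1)).length : ℤ) :=
        Int.natCast_dvd_natCast.2 (hdiv _ (hx _))
      have : Pfun x (-(n : ℤ) - 1) = Pfun x (-(n : ℤ)) - (x (-(n : ℤ) - 1)).length := by omega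
      rw [this]
      exact dvd_sub ih hd

include hblocks hrec hdiv in
lemma key_dvd {x x' : ℤ → List Bool} (hx : x ∈ SB B) (hx' : x' ∈ SB B) {t : ℤ}
    (h : Ffun x = fun m => Ffun x' (m + t)) : (q : ℤ) ∣ t := by
  have hpos := SB_pos hblocks hx
  have hpos' := SB_pos hblocks hx'
  obtain ⟨n₀, -, -, h3, h4⟩ := block_exists hpos' t
  set xsh : ℤ → List Bool := fun n => x' (n + n₀) with hxshdef
  have hxsh : xsh ∈ SB B := fun n => hx' (n + n₀)
  have hposh : ∀ n, xsh n ≠ [] := fun n => hpos' (n + n₀)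
  have hfl := isFlatten_shift hpos' n₀
  set k : ℕ := (t - Pfun x' n₀).toNat with hkdef
  have hkcast : (k : ℤ) = t - Pfun x' n₀ := Int.toNat_of_nonneg (by omega)
  have hklt : k < (xsh 0).length := by
    have hsucc := Pfun_succ x' n₀
    have h0 : xsh 0 = x' n₀ := by rw [hxshdef]; simp
    rw [h0]
    omega
  have heq : Ffun x = fun m => (fun m' => Ffun x' (m' + Pfun x' n₀)) (m + (k : ℤ)) := by
    funext m
    have h1 : Ffun x m = Ffun x' (m + t) := congrFun h m
    rw [h1]
    show Ffun x' (m + t) = Ffun x' (m + (k : ℤ) + Pfun x' n₀)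
    congr 1
    omega
  obtain ⟨hk0, -⟩ := hrec x xsh hx hxsh (Pfun x)
    (fun n => Pfun x' (n + n₀) - Pfun x' n₀) (Ffun x)
    (fun m => Ffun x' (m + Pfun x' n₀)) (isFlatten_Ffun hpos) hfl k hklt heq
  have : t = Pfun x' n₀ := by omega
  rw [this]
  exact q_dvd_Pfun hdiv hx' n₀

open Classical in
noncomputable def phase (B : Set (List Bool)) (q : ℕ) (y : ℤ → Bool) : ZMod q :=
  if h : ∃ k : ℤ, ∃ x, x ∈ SB B ∧ y = fun m => Ffun x (m + k) then
    ((h.choose : ℤ) : ZMod q) else 0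

include hblocks hrec hdiv in
lemma phase_eq {x : ℤ → List Bool} (hx : x ∈ SB B) (k : ℤ) :
    phase B q (fun m => Ffun x (m + k)) = (k : ZMod q) := by
  have hex : ∃ k' : ℤ, ∃ x', x' ∈ SB B ∧
      (fun m => Ffun x (m + k)) = fun m => Ffun x' (m + k') := ⟨k, x, hx, rfl⟩
  unfold phase
  rw [dif_pos hex]
  obtain ⟨x₀, hx₀, hy₀⟩ := hex.choose_spec
  set k₀ : ℤ := hex.choose with hk₀
  have hfe : Ffun x₀ = fun m => Ffun x (m + (k - k₀)) := by
    funext m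
    have h1 : Ffun x ((m - k₀) + k) = Ffun x₀ ((m - k₀) + k₀) := congrFun hy₀ (m - k₀)
    rw [show (m - k₀) + k₀ = m by ring] at h1
    rw [show m + (k - k₀) = (m - k₀) + k by ring]
    exact h1.symm
  have hdvd := key_dvd hblocks hrec hdiv hx₀ hx hfe
  have h0 : (((k - k₀ : ℤ)) : ZMod q) = 0 :=
    (ZMod.intCast_zmod_eq_zero_iff_dvd _ q).2 hdvd
  push_cast at h0
  have : ((k : ZMod q)) = ((k₀ : ZMod q)) := by
    have := sub_eq_zero.1 h0
    exact this
  rw [← this]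

include hblocks in
lemma mem_FlatSet {y : ℤ → Bool} : y ∈ FlatSet B ↔
    ∃ k : ℤ, ∃ x, x ∈ SB B ∧ y = fun m => Ffun x (m + k) := by
  constructor
  · rintro ⟨x, hx, p, z, hfl, k, hy⟩
    have h := flatten_unique (SB_pos hblocks hx) hfl
    exact ⟨k, x, hx, by rw [hy, h.2]⟩
  · rintro ⟨k, x, hx, hy⟩
    exact ⟨x, hx, Pfun x, Ffun x, isFlatten_Ffun (SB_pos hblocks hx), k, hy⟩

lemma shift_rep {y : ℤ → Bool} {x : ℤ → List Bool} {k : ℤ}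
    (hy : y = fun m => Ffun x (m + k)) :
    shiftMap y = fun m => Ffun x (m + (k + 1)) := by
  funext m
  show y (m + 1) = _
  rw [hy]
  show Ffun x ((m + 1) + k) = Ffun x (m + (k + 1))
  congr 1; ring

include hblocks in
lemma shift_mem {y : ℤ → Bool} (hy : y ∈ FlatSet B) : shiftMap y ∈ FlatSet B := by
  rw [mem_FlatSet hblocks] at hy ⊢
  obtain ⟨k, x, hx, hyk⟩ := hy
  exact ⟨k + 1, x, hx, shift_rep hyk⟩

include hblocks in
lemma iter_mem {y : ℤ → Bool} (hy : y ∈ FlatSet B) (j : ℕ) :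
    shiftMap^[j] y ∈ FlatSet B := by
  induction j with
  | zero => exact hy
  | succ j ih => rw [Function.iterate_succ_apply']; exact shift_mem hblocks ih

include hblocks hrec hdiv in
lemma phase_shift {y : ℤ → Bool} (hy : y ∈ FlatSet B) :
    phase B q (shiftMap y) = phase B q y + 1 := by
  rw [mem_FlatSet hblocks] at hy
  obtain ⟨k, x, hx, hyk⟩ := hy
  subst hyk
  rw [shift_rep rfl, phase_eq hblocks hrec hdiv hx, phase_eq hblocks hrec hdiv hx]
  push_cast
  ring

include hblocks hrec hdiv in
lemma phase_iterate {y : ℤ → Bool} (hy : y ∈ FlatSet B) (j : ℕ) :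
    phase B q (shiftMap^[j] y) = phase B q y + (j : ZMod q) := by
  induction j with
  | zero => simp
  | succ j ih =>
      rw [Function.iterate_succ_apply',
        phase_shift hblocks hrec hdiv (iter_mem hblocks hy j), ih]
      push_cast
      ring

include hblocks hrec hdiv in
lemma align {y : ℤ → Bool} (hy : y ∈ FlatSet B) :
    ∃ (x : ℤ → List Bool) (j : ℕ), x ∈ SB B ∧ j < (x 0).length ∧
      (((j : ℤ)) : ZMod q) = phase B q y ∧ y = fun m => Ffun x (m + (j : ℤ)) := by
  rw [mem_FlatSet hblocks] at hy
  obtain ⟨k, x, hx, hyk⟩ := hy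
  have hpos := SB_pos hblocks hx
  obtain ⟨n₀, -, -, h3, h4⟩ := block_exists hpos k
  set xsh : ℤ → List Bool := fun n => x (n + n₀) with hxshdef
  have hxsh : xsh ∈ SB B := fun n => hx (n + n₀)
  have hposh : ∀ n, xsh n ≠ [] := fun n => hpos (n + n₀)
  have hfl := isFlatten_shift hpos n₀
  have huniq := flatten_unique hposh hfl
  set j : ℕ := (k - Pfun x n₀).toNat with hjdef
  have hjcast : (j : ℤ) = k - Pfun x n₀ := Int.toNat_of_nonneg (by omega)
  have hjlt : j < (xsh 0).length := by
    have hsucc := Pfun_succ x n₀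
    have h0 : xsh 0 = x n₀ := by rw [hxshdef]; simp
    rw [h0]
    omega
  refine ⟨xsh, j, hxsh, hjlt, ?_, ?_⟩
  · rw [hyk, phase_eq hblocks hrec hdiv hx]
    have hP := q_dvd_Pfun hdiv hx n₀
    have h0 : ((Pfun x n₀ : ℤ) : ZMod q) = 0 :=
      (ZMod.intCast_zmod_eq_zero_iff_dvd _ q).2 hP
    have : ((j : ℤ) : ZMod q) = ((k : ℤ) : ZMod q) - ((Pfun x n₀ : ℤ) : ZMod q) := by
      rw [← Int.cast_sub, hjcast]
    rw [this, h0, sub_zero]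
  · funext m
    rw [hyk]
    show Ffun x (m + k) = Ffun xsh (m + (j : ℤ))
    rw [← huniq.2]
    show Ffun x (m + k) = Ffun x ((m + (j : ℤ)) + Pfun x n₀)
    congr 1
    omega

include hblocks in
lemma Ffun_mem {x : ℤ → List Bool} (hx : x ∈ SB B) (k : ℤ) :
    (fun m => Ffun x (m + k)) ∈ FlatSet B :=
  (mem_FlatSet hblocks).2 ⟨k, x, hx, rfl⟩

def Kset (B : Set (List Bool)) (q : ℕ) (c : ZMod q) : Set ((ℤ → List Bool) × ℕ) :=
  {p | p.1 ∈ SB B ∧ p.2 < (p.1 0).length ∧ (((p.2 : ℤ)) : ZMod q) = c}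

noncomputable def Psi : (ℤ → List Bool) × ℕ → (ℤ → Bool) :=
  fun p => fun m : ℤ => Ffun p.1 (m + (p.2 : ℤ))

def Sset (B : Set (List Bool)) (q : ℕ) (c : ZMod q) : Set (ℤ → Bool) :=
  Psi '' Kset B q c

lemma Psi_continuous : Continuous Psi :=
  continuous_pi fun m => continuous_Ffun_pair m

lemma Kset_compact {B : Set (List Bool)} (hfin : B.Finite) (q : ℕ) (c : ZMod q) :
    IsCompact (Kset B q c) := by
  set L : ℕ := hfin.toFinset.sup List.length with hL
  have hsub : Kset B q c ⊆ (SB B) ×ˢ (Set.Iic L) := by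
    rintro p ⟨hp1, hp2, -⟩
    refine ⟨hp1, ?_⟩
    have hLe : (p.1 0).length ≤ L := Finset.le_sup (hfin.mem_toFinset.2 (hp1 0))
    exact Set.mem_Iic.2 (le_trans hp2.le hLe)
  have hsupc : IsCompact ((SB B) ×ˢ (Set.Iic L)) :=
    (SB_compact hfin).prod ((Set.finite_Iic L).isCompact)
  have hclosed : IsClosed (Kset B q c) := by
    have h1 : IsClosed (Prod.fst ⁻¹' SB B : Set ((ℤ → List Bool) × ℕ)) :=
      (SB_closed B).preimage continuous_fst
    have hf : Continuous (fun p : (ℤ → List Bool) × ℕ => (p.1 0, p.2)) :=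
      ((continuous_apply (0 : ℤ)).comp continuous_fst).prodMk continuous_snd
    have h2 : IsClosed ((fun p : (ℤ → List Bool) × ℕ => (p.1 0, p.2)) ⁻¹'
        {w : List Bool × ℕ | w.2 < w.1.length ∧ (((w.2 : ℤ)) : ZMod q) = c}) :=
      (isClosed_discrete _).preimage hf
    have : Kset B q c = (Prod.fst ⁻¹' SB B) ∩ ((fun p : (ℤ → List Bool) × ℕ => (p.1 0, p.2)) ⁻¹'
        {w : List Bool × ℕ | w.2 < w.1.length ∧ (((w.2 : ℤ)) : ZMod q) = c}) := by
      rfl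
    rw [this]
    exact h1.inter h2
  exact IsCompact.of_isClosed_subset hsupc hclosed hsub

lemma Sset_compact {B : Set (List Bool)} (hfin : B.Finite) (q : ℕ) (c : ZMod q) :
    IsCompact (Sset B q c) :=
  (Kset_compact hfin q c).image Psi_continuous

lemma Sset_sub {B : Set (List Bool)} (hblocks : ∀ w ∈ B, w ≠ []) (hrec : Recognizable B)
    {q : ℕ} (hdiv : ∀ w ∈ B, q ∣ w.length) {c : ZMod q} {y : ℤ → Bool}
    (hy : y ∈ Sset B q c) : y ∈ FlatSet B ∧ phase B q y = c := by
  obtain ⟨p, hp, rfl⟩ := hy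
  obtain ⟨hx, hlt, hc⟩ := hp
  constructor
  · exact Ffun_mem hblocks hx (p.2 : ℤ)
  · show phase B q (fun m => Ffun p.1 (m + (p.2 : ℤ))) = c
    rw [phase_eq hblocks hrec hdiv hx]
    exact hc

lemma mem_Sset {B : Set (List Bool)} (hblocks : ∀ w ∈ B, w ≠ []) (hrec : Recognizable B)
    {q : ℕ} (hdiv : ∀ w ∈ B, q ∣ w.length) {y : ℤ → Bool}
    (hy : y ∈ FlatSet B) : y ∈ Sset B q (phase B q y) := by
  obtain ⟨x, j, hx, hlt, hc, hyx⟩ := align hblocks hrec hdiv hy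
  exact ⟨(x, j), ⟨hx, hlt, hc⟩, hyx.symm⟩

lemma stdDist_le_half {u v : ℤ → Bool} (h : stdDist u v ≤ 1/2) : u 0 = v 0 := by
  by_contra hne
  have huv : u ≠ v := fun he => hne (congrFun he 0)
  rw [stdDist, if_neg huv] at h
  have h0 : sInf {k : ℕ | ∃ m : ℤ, m.natAbs ≤ k ∧ u m ≠ v m} = 0 :=
    Nat.sInf_eq_zero.2 (Or.inl ⟨0, le_refl 0, hne⟩)
  rw [h0, pow_zero] at h
  norm_num at h

lemma iter_apply {A : Type*} (y : ℤ → A) (j : ℕ) (m : ℤ) :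
    (shiftMap^[j] y) m = y (m + (j : ℤ)) := by
  induction j generalizing y with
  | zero => simp
  | succ j ih =>
      rw [Function.iterate_succ_apply, ih (shiftMap y)]
      show y ((m + (j : ℤ)) + 1) = y (m + ((j + 1 : ℕ) : ℤ))
      congr 1
      push_cast
      ring

lemma separation {B : Set (List Bool)} (hfin : B.Finite) (hblocks : ∀ w ∈ B, w ≠ [])
    (hrec : Recognizable B) {q : ℕ} (hq : 2 ≤ q) (hdiv : ∀ w ∈ B, q ∣ w.length) :
    ∃ N : ℕ, ∀ y ∈ FlatSet B, ∀ y' ∈ FlatSet B,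
      (∀ m : ℤ, m.natAbs ≤ N → y m = y' m) → phase B q y = phase B q y' := by
  haveI : NeZero q := ⟨by omega⟩
  by_contra hcon
  push_neg at hcon
  set Bad : Set ((ℤ → Bool) × (ℤ → Bool)) :=
    ⋃ pa ∈ {pa : ZMod q × ZMod q | pa.1 ≠ pa.2}, (Sset B q pa.1) ×ˢ (Sset B q pa.2)
    with hBad
  have hBadcomp : IsCompact Bad :=
    Set.Finite.isCompact_biUnion (Set.toFinite _)
      (fun pa _ => (Sset_compact hfin q pa.1).prod (Sset_compact hfin q pa.2))
  have hBadclosed : IsClosed Bad :=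
    Set.Finite.isClosed_biUnion (Set.toFinite _)
      (fun pa _ => ((Sset_compact hfin q pa.1).prod (Sset_compact hfin q pa.2)).isClosed)
  have hAgr : ∀ N : ℕ, IsClosed {p : (ℤ → Bool) × (ℤ → Bool) |
      ∀ m : ℤ, m.natAbs ≤ N → p.1 m = p.2 m} := by
    intro N
    have : {p : (ℤ → Bool) × (ℤ → Bool) | ∀ m : ℤ, m.natAbs ≤ N → p.1 m = p.2 m} =
        ⋂ (m : ℤ) (_ : m.natAbs ≤ N), {p : (ℤ → Bool) × (ℤ → Bool) | p.1 m = p.2 m} := by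
      ext p; simp
    rw [this]
    exact isClosed_iInter fun m => isClosed_iInter fun _ =>
      isClosed_eq ((continuous_apply m).comp continuous_fst)
        ((continuous_apply m).comp continuous_snd)
  set C : ℕ → Set ((ℤ → Bool) × (ℤ → Bool)) := fun N =>
    Bad ∩ {p | ∀ m : ℤ, m.natAbs ≤ N → p.1 m = p.2 m} with hC
  have hCne : ∀ N, (C N).Nonempty := by
    intro N
    obtain ⟨y, hy, y', hy', hagr, hph⟩ := hcon N
    refine ⟨(y, y'), ?_, hagr⟩
    rw [hBad]
    refine Set.mem_biUnion (show (phase B q y, phase B q y') ∈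
      {pa : ZMod q × ZMod q | pa.1 ≠ pa.2} from hph) ?_
    exact ⟨mem_Sset hblocks hrec hdiv hy, mem_Sset hblocks hrec hdiv hy'⟩
  have hCdec : ∀ N, C (N + 1) ⊆ C N := by
    intro N p hp
    exact ⟨hp.1, fun m hm => hp.2 m (by omega)⟩
  have hCcomp : IsCompact (C 0) := hBadcomp.inter_right (hAgr 0)
  have hCclosed : ∀ N, IsClosed (C N) := fun N => hBadclosed.inter (hAgr N)
  obtain ⟨p, hp⟩ := IsCompact.nonempty_iInter_of_sequence_nonempty_isCompact_isClosed
    C hCdec hCne hCcomp hCclosed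
  have heq : p.1 = p.2 := by
    funext m
    have := (Set.mem_iInter.1 hp m.natAbs).2
    exact this m le_rfl
  have := (Set.mem_iInter.1 hp 0).1
  rw [hBad] at this
  obtain ⟨pa, hpa, hmem⟩ := Set.mem_iUnion₂.1 this
  have h1 := Sset_sub hblocks hrec hdiv hmem.1
  have h2 := Sset_sub hblocks hrec hdiv hmem.2
  apply hpa
  rw [← h1.2, ← h2.2, heq]

/-- If all block lengths of a recognizable code `B` are divisible by `q ≥ 2`, then `B^ℤ_♭`
factors onto the cyclic rotation on `ℤ/qℤ`, and consequently does not have the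
specification property. -/
theorem stmt7 (B : Set (List Bool)) (hfin : B.Finite) (hne : B.Nonempty)
    (hblocks : ∀ w ∈ B, w ≠ []) (hrec : Recognizable B)
    (q : ℕ) (hq : 2 ≤ q) (hdiv : ∀ w ∈ B, q ∣ w.length) :
    (∃ π : (ℤ → Bool) → ZMod q,
        @ContinuousOn (ℤ → Bool) (ZMod q) _ ⊥ π (FlatSet B) ∧
        π '' FlatSet B = Set.univ ∧
        ∀ y ∈ FlatSet B, π (shiftMap y) = π y + 1) ∧
      ¬ HasSpec (FlatSet B) := by
  have hNZ : NeZero q := ⟨by omega⟩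
  have hF1 : Fact (1 < q) := ⟨by omega⟩
  obtain ⟨N, hN⟩ := separation hfin hblocks hrec hq hdiv
  constructor
  · refine ⟨phase B q, ?_, ?_, ?_⟩
    · -- continuity
      intro y₀ hy₀
      set c₀ := phase B q y₀ with hc₀
      set T : Set (ℤ → Bool) := ⋃ c ∈ {c : ZMod q | c ≠ c₀}, Sset B q c with hT
      have hTclosed : IsClosed T :=
        Set.Finite.isClosed_biUnion (Set.toFinite _)
          (fun c _ => (Sset_compact hfin q c).isClosed)
      have hy₀T : y₀ ∉ T := by
        intro hmem
        obtain ⟨c, hc, hyc⟩ := Set.mem_iUnion₂.1 hmem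
        exact hc ((Sset_sub hblocks hrec hdiv hyc).2.symm.trans hc₀.symm)
      have hev : ∀ᶠ y in nhdsWithin y₀ (FlatSet B), phase B q y = c₀ := by
        filter_upwards [self_mem_nhdsWithin,
          mem_nhdsWithin_of_mem_nhds (hTclosed.isOpen_compl.mem_nhds hy₀T)] with y hyF hyT
        by_contra hne
        exact hyT (Set.mem_biUnion (show phase B q y ∈ {c : ZMod q | c ≠ c₀} from hne)
          (mem_Sset hblocks hrec hdiv hyF))
      exact Filter.Tendsto.congr' (hev.mono fun y hy => hy.symm) tendsto_const_nhds
    · -- surjectivity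
      obtain ⟨w, hw⟩ := hne
      apply Set.eq_univ_iff_forall.2
      intro c
      obtain ⟨k, hk⟩ := ZMod.intCast_surjective c
      have hxc : (fun _ : ℤ => w) ∈ SB B := fun _ => hw
      exact ⟨fun m => Ffun (fun _ : ℤ => w) (m + k), Ffun_mem hblocks hxc k,
        by rw [phase_eq hblocks hrec hdiv hxc, hk]⟩
    · -- equivariance
      intro y hy
      exact phase_shift hblocks hrec hdiv hy
  · -- no specification
    intro hspec
    obtain ⟨k, hk⟩ := hspec (1/2) (by norm_num)
    obtain ⟨w, hw⟩ := hne
    have hxc : (fun _ : ℤ => w) ∈ SB B := fun _ => hw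
    set z : ℤ → Bool := Ffun (fun _ : ℤ => w) with hzdef
    have hz0 : z = fun m => Ffun (fun _ : ℤ => w) (m + (0 : ℤ)) := by
      funext m; rw [add_zero]
    have hz : z ∈ FlatSet B := by rw [hz0]; exact Ffun_mem hblocks hxc 0
    have hphz : phase B q z = 0 := by
      rw [hz0, phase_eq hblocks hrec hdiv hxc, Int.cast_zero]
    have hsz : shiftMap z ∈ FlatSet B := shift_mem hblocks hz
    set x : Fin 2 → (ℤ → Bool) := fun i => if i.1 = 0 then z else shiftMap z with hx
    have hmem : ∀ i, x i ∈ FlatSet B := by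
      intro i
      rw [hx]
      by_cases h : i.1 = 0
      · simpa [h] using hz
      · simpa [h] using hsz
    set a : Fin 2 → ℕ := fun i => if i.1 = 0 then 0 else 2 * N + 1 + k with ha
    set b : Fin 2 → ℕ := fun i => if i.1 = 0 then 2 * N + 1
      else (2 * N + 1 + k) + (2 * N + 1) with hb
    have hab : ∀ i, a i < b i := by
      intro i
      by_cases h : i = 0 <;> simp [ha, hb, h]
    have hgap : ∀ i : Fin 2, ∀ h : i.1 + 1 < 2, b i + k ≤ a ⟨i.1 + 1, h⟩ := by
      intro i h
      have hi0 : i.1 = 0 := by omega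
      simp only [ha, hb]
      rw [if_pos hi0, if_neg (show ¬((⟨i.1 + 1, h⟩ : Fin 2).1 = 0) by simp)]
    obtain ⟨y, hyF, htr⟩ := hk 2 x hmem a b hab hgap
    have h0 : ∀ j : ℕ, j < 2 * N + 1 → z (j : ℤ) = y (j : ℤ) := by
      intro j hj
      have ht := htr ⟨0, by omega⟩ j (Nat.zero_le j) hj
      have hxz : x ⟨0, by omega⟩ = z := by simp [hx]
      rw [hxz] at ht
      have h00 := stdDist_le_half ht
      rw [iter_apply, iter_apply, zero_add] at h00
      exact h00
    have h1 : ∀ j : ℕ, 2 * N + 1 + k ≤ j → j < (2 * N + 1 + k) + (2 * N + 1) →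
        (shiftMap z) (j : ℤ) = y (j : ℤ) := by
      intro j hj1 hj2
      have ht := htr ⟨1, by omega⟩ j hj1 hj2
      have hxz : x ⟨1, by omega⟩ = shiftMap z := by simp [hx]
      rw [hxz] at ht
      have h00 := stdDist_le_half ht
      rw [iter_apply, iter_apply, zero_add] at h00
      exact h00
    have hy0 : phase B q y = phase B q z := by
      have hNapp : phase B q (shiftMap^[N] z) = phase B q (shiftMap^[N] y) := by
        apply hN _ (iter_mem hblocks hz N) _ (iter_mem hblocks hyF N)
        intro m hm
        rw [iter_apply, iter_apply]
        have hj : (((m + (N : ℤ)).toNat : ℤ)) = m + (N : ℤ) := by omega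
        have := h0 (m + (N : ℤ)).toNat (by omega)
        rw [hj] at this
        exact this
      rw [phase_iterate hblocks hrec hdiv hz N,
        phase_iterate hblocks hrec hdiv hyF N] at hNapp
      exact (add_right_cancel hNapp).symm
    have hy1 : phase B q y = phase B q z + 1 := by
      have hNapp : phase B q (shiftMap^[(2 * N + 1 + k) + N] (shiftMap z)) =
          phase B q (shiftMap^[(2 * N + 1 + k) + N] y) := by
        apply hN _ (iter_mem hblocks hsz _) _ (iter_mem hblocks hyF _)
        intro m hm
        rw [iter_apply, iter_apply]
        have hj : (((m + (((2 * N + 1 + k) + N : ℕ) : ℤ)).toNat : ℤ)) =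
            m + (((2 * N + 1 + k) + N : ℕ) : ℤ) := by
          push_cast
          omega
        have hb1 : 2 * N + 1 + k ≤ (m + (((2 * N + 1 + k) + N : ℕ) : ℤ)).toNat := by
          push_cast
          omega
        have hb2 : (m + (((2 * N + 1 + k) + N : ℕ) : ℤ)).toNat <
            (2 * N + 1 + k) + (2 * N + 1) := by
          push_cast
          omega
        have := h1 _ hb1 hb2
        rw [hj] at this
        exact this
      rw [phase_iterate hblocks hrec hdiv hsz _,
        phase_iterate hblocks hrec hdiv hyF _,
        phase_shift hblocks hrec hdiv hz] at hNapp
      exact (add_right_cancel hNapp).symm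
    rw [hy0, hphz] at hy1
    simp at hy1
end Main
end

section
/- Let A be a finite alphabet containing #, a, b, c, d with a,b,c,d distinct elements of A∖{#}. For s ∈ {b,c,d}, let φ_s be the automorphism of A^ℤ given by the radius-1 block code that replaces the middle letter y of xyz by a if y = s and x ∉ {s,a}, by s if y = a and x ∉ {s,a}, and leaves it unchanged otherwise. Then each φ_s is an involution and the group generated by φ_b, φ_c, φ_d in Aut(A^ℤ) is isomorphic to the free product ℤ/2 * ℤ/2 * ℤ/2; moreover no nontrivial element of this group fixes all but finitely many words over A∖{#}. -/
open Function

/-- The sliding block code (radius 1) induced on `A^ℤ` by a local rule. -/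
def blockMap {A : Type*} (f : A → A → A → A) (x : ℤ → A) : ℤ → A :=
  fun n => f (x (n - 1)) (x n) (x (n + 1))

/-- The local rule `f_s` (relative to `a`): it swaps `s` and `a` at positions whose
predecessor is not in `{s, a}`. -/
def fS {A : Type*} [DecidableEq A] (a s : A) : A → A → A → A :=
  fun p y _ =>
    if y = s ∧ p ≠ s ∧ p ≠ a then a
    else if y = a ∧ p ≠ s ∧ p ≠ a then s
    else y

/-- The periodic point `(# w # w # w …)` associated to a word `w` over `A∖{#}`;
an automorphism represented on words by `φ*` fixes the word `w` iff it fixes this point. -/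
def ptWord {A : Type*} [DecidableEq A] (hash : A) (w : List A) : ℤ → A :=
  fun m =>
    let j := (m % ((w.length : ℤ) + 1)).toNat
    if j = 0 then hash else w.getD (j - 1) hash

set_option linter.unusedSectionVars false

namespace Stmt12Aux
variable {A : Type*} [DecidableEq A]

lemma fS_invol (a s : A) (has : a ≠ s) (q p y z z2 w : A) :
    fS a s (fS a s q p z2) (fS a s p y z) w = y := by
  unfold fS
  split_ifs <;> simp_all

def stepT (a t : A) (p : A) : List A → List A
  | [] => []
  | y :: rest => fS a t p y y :: stepT a t y rest

@[simp] lemma stepT_length (a t p : A) (w : List A) : (stepT a t p w).length = w.length := by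
  induction w generalizing p with
  | nil => rfl
  | cons y rest ih => simp [stepT, ih]

lemma stepT_getElem (a t p : A) (w : List A) (i : ℕ) (hi : i < w.length) :
    (stepT a t p w)[i]'(by simpa using hi) =
      fS a t ((p :: w)[i]'(by simp; omega)) (w[i]) (w[i]) := by
  induction w generalizing p i with
  | nil => simp at hi
  | cons y rest ih =>
    cases i with
    | zero => rfl
    | succ n => simpa [stepT] using ih y n (by simpa using hi)

lemma stepT_append (a t p : A) (u v : List A) :
    stepT a t p (u ++ v) = stepT a t p u ++ stepT a t (u.getLastD p) v := by
  induction u generalizing p with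
  | nil => rfl
  | cons y rest ih =>
    simp only [List.cons_append, stepT, List.getLastD_cons, List.append_eq, ih y]

lemma stepT_replicate_self (a t : A) (m : ℕ) :
    stepT a t a (List.replicate m a) = List.replicate m a := by
  induction m with
  | zero => rfl
  | succ n ih => simpa [List.replicate_succ, stepT, fS] using ih

lemma stepT_replicate (a t q : A) (hq1 : q ≠ t) (hq2 : q ≠ a) (hta : t ≠ a) (m : ℕ) (hm : 1 ≤ m) :
    stepT a t q (List.replicate m a) = t :: List.replicate (m - 1) a := by
  obtain ⟨m, rfl⟩ : ∃ k, m = k + 1 := ⟨m - 1, by omega⟩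
  rw [List.replicate_succ]
  simp [stepT, fS, hq1, hq2, Ne.symm hta, stepT_replicate_self]

end Stmt12Aux

namespace Stmt12Aux
variable {A : Type*} [DecidableEq A]

lemma blockMap_ptWord (hash a t : A) (hth : hash ≠ t) (hha : hash ≠ a) (w : List A) :
    blockMap (fS a t) (ptWord hash w) = ptWord hash (stepT a t hash w) := by
  funext m
  simp only [blockMap, ptWord, stepT_length]
  set P : ℤ := (w.length : ℤ) + 1 with hPdef
  have hP0 : 0 < P := by positivity
  have hr0 : 0 ≤ m % P := Int.emod_nonneg m (by omega)
  have hrP : m % P < P := Int.emod_lt_of_pos m hP0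
  by_cases hj : (m % P).toNat = 0
  · rw [if_pos hj, if_pos hj]
    simp [fS, hth, hha]
  · rw [if_neg hj, if_neg hj]
    have hj1 : 1 ≤ (m % P).toNat := Nat.pos_of_ne_zero hj
    have hjlen : (m % P).toNat - 1 < w.length := by omega
    have hlen1 : 1 ≤ w.length := by omega
    have hm1 : (m - 1) % P = m % P - 1 := by
      rw [Int.sub_emod]
      rw [show (1 : ℤ) % P = 1 from Int.emod_eq_of_lt (by omega) (by omega)]
      exact Int.emod_eq_of_lt (by omega) (by omega)
    have hm1' : ((m - 1) % P).toNat = (m % P).toNat - 1 := by omega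
    rw [hm1']
    rw [List.getD_eq_getElem _ _ (show (m % P).toNat - 1 < (stepT a t hash w).length by
          simpa using hjlen),
        stepT_getElem a t hash w _ hjlen, List.getElem_cons]
    by_cases hj2 : (m % P).toNat = 1
    · rw [dif_pos (by omega), if_pos (by omega), List.getD_eq_getElem w _ hjlen]
      rfl
    · rw [dif_neg (by omega), if_neg (by omega), List.getD_eq_getElem w _ hjlen,
        List.getD_eq_getElem w _ (show (m % P).toNat - 1 - 1 < w.length by omega)]
      rfl

end Stmt12Aux

namespace Stmt12Aux
variable {A : Type*} [DecidableEq A]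

lemma getLastD_concat (l : List A) (x d : A) : (l ++ [x]).getLastD d = x := by
  induction l generalizing d with
  | nil => rfl
  | cons y rest ih => rw [List.cons_append, List.getLastD_cons, ih]

lemma getD_last (l : List A) (d : A) : l.getD (l.length - 1) d = l.getLastD d := by
  induction l with
  | nil => rfl
  | cons x l ih =>
    cases l with
    | nil => rfl
    | cons y m =>
      rw [show (x :: y :: m).length - 1 = ((y :: m).length - 1) + 1 by simp]
      rw [List.getD_cons_succ, ih]
      simp [List.getLastD_cons]

lemma getLastD_mem (l : List A) (hl : l ≠ []) (d : A) : l.getLastD d ∈ l := by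
  induction l generalizing d with
  | nil => exact absurd rfl hl
  | cons y rest ih =>
    rw [List.getLastD_cons]
    rcases eq_or_ne rest [] with rfl | h
    · simp
    · exact List.mem_cons_of_mem _ (ih h y)

lemma applyAll_ptWord (hash a : A) (hha : hash ≠ a) (ts : List A) :
    ∀ (u : List A) (m : ℕ),
      ts.length ≤ m →
      (∀ t ∈ ts, t ≠ a ∧ hash ≠ t) →
      List.Chain' (· ≠ ·) (u.getLastD hash :: ts) →
      u.getLastD hash ≠ a →
      ∃ u' : List A, u'.length = u.length + ts.length ∧
        u'.getLastD hash = ts.getLastD (u.getLastD hash) ∧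
        List.foldl (fun y t => blockMap (fS a t) y) (ptWord hash (u ++ List.replicate m a)) ts
          = ptWord hash (u' ++ List.replicate (m - ts.length) a) := by
  induction ts with
  | nil => intro u m _ _ _ _; exact ⟨u, by simp⟩
  | cons t ts ih =>
    intro u m hm hmem hch hla
    obtain ⟨hta, hht⟩ := hmem t (List.mem_cons_self ..)
    have hlt : u.getLastD hash ≠ t := (List.isChain_cons_cons.mp hch).1
    have key : blockMap (fS a t) (ptWord hash (u ++ List.replicate m a))
        = ptWord hash ((stepT a t hash u ++ [t]) ++ List.replicate (m - 1) a) := by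
      rw [blockMap_ptWord hash a t hht hha, stepT_append,
        stepT_replicate a t _ hlt hla hta m (by have := hm; simp at this; omega)]
      rw [List.append_assoc, List.singleton_append]
    obtain ⟨u', h1, h2, h3⟩ := ih (stepT a t hash u ++ [t]) (m - 1)
      (by have h := hm; simp only [List.length_cons] at h; omega) (fun x hx => hmem x (List.mem_cons_of_mem _ hx))
      (by rw [getLastD_concat]; exact (List.isChain_cons_cons.mp hch).2)
      (by rw [getLastD_concat]; exact hta)
    refine ⟨u', ?_, ?_, ?_⟩
    · simp only [h1, List.length_append, stepT_length, List.length_cons, List.length_nil]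
      omega
    · show u'.getLastD hash = (t :: ts).getLastD (u.getLastD hash)
      rw [h2, getLastD_concat, List.getLastD_cons]
    · rw [List.foldl_cons, key, h3,
        show m - 1 - ts.length = m - (ts.length + 1) from by omega]
      rfl

lemma core (hash a : A) (hha : hash ≠ a) (ts : List A) (hne : ts ≠ [])
    (hmem : ∀ t ∈ ts, t ≠ a ∧ hash ≠ t) (hch : ts.Chain' (· ≠ ·)) (n : ℕ)
    (hn : ts.length < n) :
    List.foldl (fun y t => blockMap (fS a t) y) (ptWord hash (List.replicate n a)) ts
      ≠ ptWord hash (List.replicate n a) := by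
  have hch' : List.Chain' (· ≠ ·) (([] : List A).getLastD hash :: ts) := by
    show List.IsChain _ _
    rw [List.isChain_cons]
    refine ⟨fun h hh => (hmem h (List.mem_of_mem_head? hh)).2, hch⟩
  obtain ⟨u', hlen, hlast, heq⟩ :=
    applyAll_ptWord hash a hha ts [] n (le_of_lt hn) hmem hch' hha
  simp only [List.nil_append, List.length_nil, Nat.zero_add] at hlen hlast heq
  rw [heq]
  intro hcontra
  set k := ts.length with hk
  have hk1 : 1 ≤ k := List.length_pos_iff.mpr hne
  have hcf := congrFun hcontra (k : ℤ)
  have hlen2 : (u' ++ List.replicate (n - k) a).length = n := by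
    simp [hlen]; omega
  have hmod : ((k : ℤ) % ((n : ℤ) + 1)).toNat = k := by
    rw [Int.emod_eq_of_lt (by omega) (by omega)]; omega
  simp only [ptWord, hlen2, List.length_replicate, hmod] at hcf
  rw [if_neg (by omega), if_neg (by omega)] at hcf
  rw [List.getD_append _ _ _ _ (by omega)] at hcf
  have hrep : (List.replicate n a).getD (k - 1) hash = a := by
    have hb : k - 1 < (List.replicate n a).length := by simp; omega
    rw [List.getD_eq_getElem _ _ hb, List.getElem_replicate]
  rw [hrep] at hcf
  rw [show k - 1 = u'.length - 1 by omega, getD_last, hlast] at hcf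
  have hmem' : ts.getLastD hash ∈ ts := getLastD_mem ts hne hash
  exact (hmem _ hmem').1 (by simpa using hcf)

end Stmt12Aux

namespace Stmt12Aux

/-- The homomorphism `Multiplicative (ZMod 2) →* G` sending the generator to an involution. -/
def zmod2Hom {G : Type*} [Group G] (g : G) (hg : g * g = 1) : Multiplicative (ZMod 2) →* G where
  toFun x := g ^ (Multiplicative.toAdd x).val
  map_one' := by simp
  map_mul' x y := by
    have h2 : g ^ 2 = 1 := by rw [pow_two, hg]
    have key : ∀ m : ℕ, g ^ (m % 2) = g ^ m := fun m => by
      conv_rhs => rw [← Nat.div_add_mod m 2]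
      rw [pow_add, pow_mul, h2, one_pow, one_mul]
    show g ^ (Multiplicative.toAdd (x * y)).val = _
    rw [toAdd_mul, ZMod.val_add, key, pow_add]

lemma zmod2Hom_apply_one {G : Type*} [Group G] (g : G) (hg : g * g = 1) :
    zmod2Hom g hg (Multiplicative.ofAdd 1) = g := by
  show g ^ (Multiplicative.toAdd (Multiplicative.ofAdd (1 : ZMod 2))).val = g
  rw [toAdd_ofAdd, ZMod.val_one, pow_one]

lemma perm_list_prod_apply {X : Type*} (l : List (Equiv.Perm X)) (x : X) :
    l.prod x = l.foldr (fun σ y => σ y) x := by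
  induction l with
  | nil => simp
  | cons σ l ih => simp [Equiv.Perm.mul_apply, ih]

lemma zmod2_cases : ∀ x : Multiplicative (ZMod 2),
    x = 1 ∨ x = Multiplicative.ofAdd (1 : ZMod 2) := by decide

end Stmt12Aux


open Stmt12Aux in
/-- The automorphisms `φ_b, φ_c, φ_d` are involutions, generate a copy of
`ℤ/2 * ℤ/2 * ℤ/2` in `Aut(A^ℤ)`, and no nontrivial element of this group fixes all but
finitely many words over `A∖{#}`. -/
theorem stmt12 {A : Type*} [Fintype A] [DecidableEq A]
    (hash a b c d : A)
    (hdist : ([a, b, c, d, hash] : List A).Pairwise (· ≠ ·))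
    (φb φc φd : Equiv.Perm (ℤ → A))
    (hφb : ⇑φb = blockMap (fS a b)) (hφc : ⇑φc = blockMap (fS a c))
    (hφd : ⇑φd = blockMap (fS a d)) :
    (∀ s ∈ ({b, c, d} : Set A), blockMap (fS a s) ∘ blockMap (fS a s) = id) ∧
    Nonempty (↥(Subgroup.closure ({φb, φc, φd} : Set (Equiv.Perm (ℤ → A)))) ≃*
      Monoid.CoprodI fun _ : Fin 3 => Multiplicative (ZMod 2)) ∧
    (∀ ψ : Equiv.Perm (ℤ → A),
        ψ ∈ Subgroup.closure ({φb, φc, φd} : Set (Equiv.Perm (ℤ → A))) → ψ ≠ 1 →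
        {w : List A | (∀ e ∈ w, e ≠ hash) ∧ ψ (ptWord hash w) ≠ ptWord hash w}.Infinite) := by
  classical
  have h2 : ([b, c, d, hash] : List A).Pairwise (· ≠ ·) := hdist.of_cons
  have h3 : ([c, d, hash] : List A).Pairwise (· ≠ ·) := h2.of_cons
  have h4 : ([d, hash] : List A).Pairwise (· ≠ ·) := h3.of_cons
  have hab : a ≠ b := List.rel_of_pairwise_cons hdist (by simp)
  have hac : a ≠ c := List.rel_of_pairwise_cons hdist (by simp)
  have had : a ≠ d := List.rel_of_pairwise_cons hdist (by simp)
  have hah : a ≠ hash := List.rel_of_pairwise_cons hdist (by simp)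
  have hbc : b ≠ c := List.rel_of_pairwise_cons h2 (by simp)
  have hbd : b ≠ d := List.rel_of_pairwise_cons h2 (by simp)
  have hbh : b ≠ hash := List.rel_of_pairwise_cons h2 (by simp)
  have hcd : c ≠ d := List.rel_of_pairwise_cons h3 (by simp)
  have hch : c ≠ hash := List.rel_of_pairwise_cons h3 (by simp)
  have hdh : d ≠ hash := List.rel_of_pairwise_cons h4 (by simp)
  have hinvol : ∀ s : A, a ≠ s → blockMap (fS a s) ∘ blockMap (fS a s) = id := by
    intro s has
    funext x n
    show blockMap (fS a s) (blockMap (fS a s) x) n = x n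
    exact fS_invol a s has _ _ _ _ _ _
  have part1 : ∀ s ∈ ({b, c, d} : Set A),
      blockMap (fS a s) ∘ blockMap (fS a s) = id := by
    intro s hs
    simp only [Set.mem_insert_iff, Set.mem_singleton_iff] at hs
    rcases hs with rfl | rfl | rfl
    exacts [hinvol s hab, hinvol s hac, hinvol s had]
  set Φ : Fin 3 → Equiv.Perm (ℤ → A) := ![φb, φc, φd] with hΦ
  set letter : Fin 3 → A := ![b, c, d] with hletter
  have hΦcoe : ∀ i, ⇑(Φ i) = blockMap (fS a (letter i)) := by
    intro i
    fin_cases i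
    exacts [hφb, hφc, hφd]
  have haletter : ∀ i, a ≠ letter i := by
    intro i; fin_cases i
    exacts [hab, hac, had]
  have hhletter : ∀ i, hash ≠ letter i := by
    intro i; fin_cases i
    exacts [Ne.symm hbh, Ne.symm hch, Ne.symm hdh]
  have hletterinj : Function.Injective letter := by
    intro i j h
    fin_cases i <;> fin_cases j <;> simp_all [hletter] <;> first | rfl | exact absurd h (by tauto)
  have hΦinv : ∀ i, Φ i * Φ i = 1 := by
    intro i
    apply Equiv.ext
    intro x
    rw [Equiv.Perm.mul_apply, hΦcoe i]
    exact congrFun (hinvol (letter i) (haletter i)) x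
  set π := Monoid.CoprodI.lift (fun i : Fin 3 => zmod2Hom (Φ i) (hΦinv i)) with hπ
  have hπof : ∀ i : Fin 3,
      π (Monoid.CoprodI.of (i := i) (Multiplicative.ofAdd (1 : ZMod 2))) = Φ i := by
    intro i
    rw [hπ, Monoid.CoprodI.lift_of]
    exact zmod2Hom_apply_one _ _
  have main : ∀ g : Monoid.CoprodI (fun _ : Fin 3 => Multiplicative (ZMod 2)), g ≠ 1 →
      ∃ k : ℕ, ∀ n : ℕ, k < n →
        π g (ptWord hash (List.replicate n a)) ≠ ptWord hash (List.replicate n a) := by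
    intro g hg
    set w := Monoid.CoprodI.Word.equiv g with hw
    have hprod : Monoid.CoprodI.Word.prod w = g := Monoid.CoprodI.Word.equiv.symm_apply_apply g
    have hL : w.toList ≠ [] := by
      intro h
      apply hg
      rw [← hprod]
      simp [Monoid.CoprodI.Word.prod, h]
    refine ⟨w.toList.length, fun n hn => ?_⟩
    have hπg : ∀ x : ℤ → A, π g x =
        List.foldl (fun y t => blockMap (fS a t) y) x
          ((w.toList.map (fun l => letter l.1)).reverse) := by
      intro x
      have h1 : g = (w.toList.map fun l =>
          Monoid.CoprodI.of (M := fun _ : Fin 3 => Multiplicative (ZMod 2)) (i := l.1) l.snd).prod := by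
        rw [← hprod]; rfl
      have hmapeq : w.toList.map (π ∘ fun l =>
            Monoid.CoprodI.of (M := fun _ : Fin 3 => Multiplicative (ZMod 2)) (i := l.1) l.snd)
          = w.toList.map (fun l => Φ l.1) := by
        apply List.map_congr_left
        intro l hl
        have h2 : l.2 ≠ 1 := w.ne_one l hl
        rcases zmod2_cases l.2 with h | h
        · exact absurd h h2
        · show π (Monoid.CoprodI.of (M := fun _ : Fin 3 => Multiplicative (ZMod 2)) (i := l.1) l.2) = Φ l.1
          rw [h, hπof l.1]
      conv_lhs => rw [h1]
      rw [map_list_prod, List.map_map, hmapeq, perm_list_prod_apply,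
        List.foldl_reverse, List.foldr_map, List.foldr_map]
      have : (fun (l : Σ _ : Fin 3, Multiplicative (ZMod 2)) (y : ℤ → A) => (Φ l.1) y)
          = fun l y => blockMap (fS a (letter l.1)) y := by
        funext l y
        rw [hΦcoe]
      rw [this]
    rw [hπg]
    refine core hash a (Ne.symm hah) _ ?_ ?_ ?_ n ?_
    · simpa using hL
    · intro t ht
      simp only [List.mem_reverse, List.mem_map] at ht
      obtain ⟨l, -, rfl⟩ := ht
      exact ⟨Ne.symm (haletter l.1), hhletter l.1⟩
    · show List.IsChain _ _
      rw [List.isChain_reverse]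
      have hcn : List.Chain' (fun l l' => letter l.1 ≠ letter l'.1) w.toList :=
        w.chain_ne.imp fun l l' h hc => h (hletterinj hc)
      have hmapped : List.Chain' (· ≠ ·) (w.toList.map fun l => letter l.1) :=
        (List.isChain_map _).mpr hcn
      exact hmapped.imp fun x y h => Ne.symm h
    · simpa using hn
  have hπinj : Function.Injective π := by
    rw [injective_iff_map_eq_one]
    intro g hg1
    by_contra hg
    obtain ⟨k, hk⟩ := main g hg
    refine hk (k + 1) (by omega) ?_
    rw [hg1]
    simp
  have hrange : π.range = Subgroup.closure ({φb, φc, φd} : Set (Equiv.Perm (ℤ → A))) := by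
    apply le_antisymm
    · rintro x ⟨g, rfl⟩
      induction g using Monoid.CoprodI.induction_on with
      | one => simpa using Subgroup.one_mem _
      | of i m =>
        rcases zmod2_cases m with rfl | rfl
        · simpa using Subgroup.one_mem _
        · rw [hπof i]
          apply Subgroup.subset_closure
          fin_cases i <;> simp [hΦ]
      | mul x y hx hy =>
        rw [map_mul]
        exact Subgroup.mul_mem _ hx hy
    · rw [Subgroup.closure_le]
      rintro x hx
      simp only [Set.mem_insert_iff, Set.mem_singleton_iff] at hx
      rcases hx with rfl | rfl | rfl
      · exact ⟨Monoid.CoprodI.of (i := 0) (Multiplicative.ofAdd (1 : ZMod 2)),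
          by rw [hπof]; simp [hΦ]⟩
      · exact ⟨Monoid.CoprodI.of (i := 1) (Multiplicative.ofAdd (1 : ZMod 2)),
          by rw [hπof]; simp [hΦ]⟩
      · exact ⟨Monoid.CoprodI.of (i := 2) (Multiplicative.ofAdd (1 : ZMod 2)),
          by rw [hπof]; simp [hΦ]⟩
  refine ⟨part1, ⟨(MulEquiv.subgroupCongr hrange.symm).trans
    (MonoidHom.ofInjective hπinj).symm⟩, ?_⟩
  intro ψ hψ hψ1
  rw [← hrange] at hψ
  obtain ⟨g, rfl⟩ := hψ
  have hg : g ≠ 1 := by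
    rintro rfl
    exact hψ1 (map_one π)
  obtain ⟨k, hk⟩ := main g hg
  apply Set.infinite_of_injective_forall_mem
    (f := fun n : ℕ => List.replicate (n + k + 1) a)
  · intro n m h
    have := congrArg List.length h
    simpa using this
  · intro n
    refine ⟨fun e he => ?_, hk (n + k + 1) (by omega)⟩
    rw [List.eq_of_mem_replicate he]
    exact hah
end

section
/- In the setting of the eight-symbol construction, the automorphisms φ_s for s ∈ {b₁,c₁,d₁} commute with the automorphisms φ_t for t ∈ {b₂,c₂,d₂}, and the group ⟨φ_{b₁},φ_{c₁},φ_{d₁},φ_{b₂},φ_{c₂},φ_{d₂}⟩ is isomorphic to (ℤ/2 * ℤ/2 * ℤ/2) × (ℤ/2 * ℤ/2 * ℤ/2). -/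
open Function

section Helpers

variable {A : Type*} [DecidableEq A]

lemma fS_of_ne (a s p y z : A) (h1 : y ≠ s) (h2 : y ≠ a) : fS a s p y z = y := by
  unfold fS; rw [if_neg (by tauto), if_neg (by tauto)]

lemma fS_preserves (a s : A) (c : A) (hc1 : c ≠ s) (hc2 : c ≠ a) (p q j : A) :
    fS a s p q j = c ↔ q = c := by
  unfold fS; split_ifs <;> simp_all <;> tauto

lemma fS_congr_pred (a s : A) (p p' y j j' : A) (hp1 : (p = s) ↔ (p' = s))
    (hp2 : (p = a) ↔ (p' = a)) : fS a s p y j = fS a s p' y j' := by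
  unfold fS; split_ifs <;> tauto

lemma fS_cases (a s p q j : A) : fS a s p q j = a ∨ fS a s p q j = s ∨ fS a s p q j = q := by
  unfold fS; split_ifs <;> tauto

lemma fS_key_invol (a s : A) (hs : s ≠ a) (p q r j : A) :
    fS a s (fS a s p q j) (fS a s q r j) j = r := by
  unfold fS; split_ifs <;> simp_all <;> tauto

lemma fS_key_comm_aux (a s a' t : A) (h1 : a ≠ a') (h2 : a ≠ t) (h3 : s ≠ a') (h4 : s ≠ t)
    (p q r j : A) (hr : r ≠ t) (hr2 : r ≠ a') :
    fS a s (fS a' t p q j) (fS a' t q r j) j = fS a' t (fS a s p q j) (fS a s q r j) j := by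
  rw [fS_of_ne a' t q r j hr hr2]
  have hv : fS a' t (fS a s p q j) (fS a s q r j) j = fS a s q r j := by
    rcases fS_cases a s q r j with h | h | h <;> rw [h] <;>
      [exact fS_of_ne _ _ _ _ _ h2 h1; exact fS_of_ne _ _ _ _ _ h4 h3;
       exact fS_of_ne _ _ _ _ _ hr hr2]
  rw [hv]
  exact fS_congr_pred a s _ q _ j j
    (fS_preserves a' t s h4 h3 p q j) (fS_preserves a' t a h2 h1 p q j)

lemma fS_key_comm (a s a' t : A) (h1 : a ≠ a') (h2 : a ≠ t) (h3 : s ≠ a') (h4 : s ≠ t)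
    (p q r j : A) :
    fS a s (fS a' t p q j) (fS a' t q r j) j = fS a' t (fS a s p q j) (fS a s q r j) j := by
  by_cases hr : r ≠ t ∧ r ≠ a'
  · exact fS_key_comm_aux a s a' t h1 h2 h3 h4 p q r j hr.1 hr.2
  · have hr' : r ≠ s ∧ r ≠ a := by
      rcases not_and_or.mp hr with h | h <;> rw [not_not] at h <;> subst h <;>
        exact ⟨by tauto, by tauto⟩
    exact (fS_key_comm_aux a' t a s h1.symm h3.symm h2.symm h4.symm p q r j hr'.1 hr'.2).symm

lemma blockMap_fS_invol (a s : A) (hs : s ≠ a) (x : ℤ → A) :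
    blockMap (fS a s) (blockMap (fS a s) x) = x := by
  funext n
  exact fS_key_invol a s hs (x (n - 1 - 1)) (x (n - 1)) (x n) _

lemma blockMap_fS_comm (a s a' t : A) (h1 : a ≠ a') (h2 : a ≠ t) (h3 : s ≠ a') (h4 : s ≠ t)
    (x : ℤ → A) :
    blockMap (fS a s) (blockMap (fS a' t) x) = blockMap (fS a' t) (blockMap (fS a s) x) := by
  funext n
  exact fS_key_comm a s a' t h1 h2 h3 h4 (x (n - 1 - 1)) (x (n - 1)) (x n) _

/-- The base point `… # # # a a a …`. -/
def basePt (hash a : A) : ℤ → A := fun n => if n < 0 then hash else a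

lemma basePt_nonneg (hash a : A) (n : ℤ) (hn : 0 ≤ n) : basePt hash a n = a := by
  simp [basePt, not_lt.mpr hn]

lemma basePt_neg (hash a : A) (n : ℤ) (hn : n < 0) : basePt hash a n = hash := by
  simp [basePt, hn]

lemma blockMap_fS_fix_basePt (a s hash b : A) (hb1 : b ≠ s) (hb2 : b ≠ a)
    (hh1 : hash ≠ s) (hh2 : hash ≠ a) :
    blockMap (fS a s) (basePt hash b) = basePt hash b := by
  funext n
  show fS a s (basePt hash b (n - 1)) (basePt hash b n) (basePt hash b (n + 1)) =
    basePt hash b n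
  by_cases h : n < 0
  · rw [basePt_neg hash b n h]; exact fS_of_ne _ _ _ _ _ hh1 hh2
  · rw [basePt_nonneg hash b n (not_lt.mp h)]; exact fS_of_ne _ _ _ _ _ hb1 hb2

/-- The key step: applying `φ_t` to a configuration that is `a` from position `k` on and has a
symbol `s ∉ {t, a}` at position `k-1` pushes the front one step to the right, writing `t`. -/
lemma fS_step (a s t : A) (x : ℤ → A) (k : ℕ) (hta : t ≠ a) (hst : s ≠ t) (hsa : s ≠ a)
    (h1 : ∀ n : ℤ, (k : ℤ) ≤ n → x n = a) (h2 : x ((k : ℤ) - 1) = s) :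
    (∀ n : ℤ, ((k + 1 : ℕ) : ℤ) ≤ n → blockMap (fS a t) x n = a) ∧
      blockMap (fS a t) x (((k + 1 : ℕ) : ℤ) - 1) = t := by
  constructor
  · intro n hn
    push_cast at hn
    have hxn : x n = a := h1 n (by omega)
    have hxn1 : x (n - 1) = a := h1 (n - 1) (by omega)
    show fS a t (x (n - 1)) (x n) (x (n + 1)) = a
    rw [hxn, hxn1]
    unfold fS
    rw [if_neg (by tauto), if_neg (by tauto)]
  · have hk : ((k + 1 : ℕ) : ℤ) - 1 = (k : ℤ) := by push_cast; ring
    rw [hk]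
    show fS a t (x ((k : ℤ) - 1)) (x (k : ℤ)) (x ((k : ℤ) + 1)) = t
    rw [h2, h1 (k : ℤ) le_rfl]
    unfold fS
    rw [if_neg (by tauto), if_pos (by tauto)]

variable (hash a : A) (s : Fin 3 → A) (φ : Fin 3 → Equiv.Perm (ℤ → A))
variable (hφ : ∀ i, ⇑(φ i) = blockMap (fS a (s i)))
variable (hsa : ∀ i, s i ≠ a) (hha : hash ≠ a) (hhs : ∀ i, hash ≠ s i)
variable (hinj : Function.Injective s)

include hφ hsa hha hhs hinj in
/-- The invariant: applying a reduced word of `φ`'s to the base point yields a configuration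
that is `a` from position `l.length` on and carries the latest letter at position
`l.length - 1`. -/
lemma chain_invariant : ∀ l : List (Fin 3), l.Chain' (· ≠ ·) →
    (∀ n : ℤ, (l.length : ℤ) ≤ n → ((l.map φ).prod : Equiv.Perm (ℤ → A)) (basePt hash a) n = a) ∧
      ((l.map φ).prod : Equiv.Perm (ℤ → A)) (basePt hash a) ((l.length : ℤ) - 1) =
        l.head?.elim hash s := by
  intro l
  induction l with
  | nil =>
    intro _
    refine ⟨fun n hn => ?_, ?_⟩
    · simpa using basePt_nonneg hash a n (by exact_mod_cast hn)
    · simpa using basePt_neg hash a (-1) (by norm_num)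
  | cons i l ih =>
    intro hchain
    obtain ⟨hih1, hih2⟩ := ih hchain.tail
    have hmul : ((List.map φ (i :: l)).prod : Equiv.Perm (ℤ → A)) (basePt hash a) =
        (φ i) (((l.map φ).prod : Equiv.Perm (ℤ → A)) (basePt hash a)) := by
      rw [List.map_cons, List.prod_cons, Equiv.Perm.mul_apply]
    set y := ((l.map φ).prod : Equiv.Perm (ℤ → A)) (basePt hash a) with hy
    have hne : l.head?.elim hash s ≠ s i ∧ l.head?.elim hash s ≠ a := by
      cases l with
      | nil => exact ⟨hhs i, hha⟩
      | cons j l' =>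
        have hij : i ≠ j := (List.isChain_cons_cons.mp hchain).1
        exact ⟨by simpa using fun h => hij (hinj h).symm, by simpa using hsa j⟩
    have hstep := fS_step a (l.head?.elim hash s) (s i) y l.length (hsa i) hne.1 hne.2
      hih1 hih2
    constructor
    · intro n hn
      rw [hmul, hφ i]
      exact hstep.1 n (by simpa using hn)
    · rw [hmul, hφ i]
      have : ((i :: l).length : ℤ) - 1 = ((l.length + 1 : ℕ) : ℤ) - 1 := by simp
      rw [this]
      simpa using hstep.2

include hφ hsa hha hhs hinj in
lemma prod_ne_fix : ∀ l : List (Fin 3), l.Chain' (· ≠ ·) → l ≠ [] →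
    ((l.map φ).prod : Equiv.Perm (ℤ → A)) (basePt hash a) ≠ basePt hash a := by
  intro l hchain hne h
  obtain ⟨h1, h2⟩ := chain_invariant hash a s φ hφ hsa hha hhs hinj l hchain
  rw [h] at h2
  cases l with
  | nil => exact hne rfl
  | cons i l' =>
    rw [basePt_nonneg hash a _ (by push_cast [List.length_cons]; omega)] at h2
    simp only [List.head?_cons, Option.elim_some] at h2
    exact hsa i h2.symm

/-- Homomorphism from `Multiplicative (ZMod 2)` sending the generator to an involution. -/
def invHom {G : Type*} [Monoid G] (g : G) (hg : g * g = 1) : Multiplicative (ZMod 2) →* G where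
  toFun x := if Multiplicative.toAdd x = 1 then g else 1
  map_one' := by norm_num
  map_mul' x y := by
    have h2 : ∀ z : ZMod 2, z = 0 ∨ z = 1 := by decide
    rcases h2 (Multiplicative.toAdd x) with h | h <;> rcases h2 (Multiplicative.toAdd y) with h' | h' <;>
      simp [toAdd_mul, h, h', hg]

lemma invHom_apply_ne_one {G : Type*} [Monoid G] (g : G) (hg : g * g = 1)
    (x : Multiplicative (ZMod 2)) (hx : x ≠ 1) : invHom g hg x = g := by
  have : Multiplicative.toAdd x = 1 := by
    have h2 : ∀ z : ZMod 2, z = 0 ∨ z = 1 := by decide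
    rcases h2 (Multiplicative.toAdd x) with h | h
    · exact absurd (by simpa [← toAdd_one] using h) (by simpa using hx)
    · exact h
  simp [invHom, this]

lemma invHom_cases {G : Type*} [Monoid G] (g : G) (hg : g * g = 1)
    (x : Multiplicative (ZMod 2)) : invHom g hg x = g ∨ invHom g hg x = 1 := by
  by_cases h : Multiplicative.toAdd x = 1 <;> simp [invHom, h]

include hφ hsa hha hhs hinj in
lemma lift_fix_eq_one (hinv : ∀ i, φ i * φ i = 1)
    (u : Monoid.CoprodI fun _ : Fin 3 => Multiplicative (ZMod 2))
    (hu : (Monoid.CoprodI.lift (fun i => invHom (φ i) (hinv i)) u) (basePt hash a) =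
      basePt hash a) : u = 1 := by
  set Φ := Monoid.CoprodI.lift (fun i => invHom (φ i) (hinv i)) with hΦ
  set w := Monoid.CoprodI.Word.equiv u with hw
  have hprod : w.prod = u := Monoid.CoprodI.Word.equiv.symm_apply_apply u
  have hΦu : Φ u = ((w.toList.map Sigma.fst).map φ).prod := by
    rw [← hprod]
    show Φ ((w.toList.map fun l => Monoid.CoprodI.of l.2).prod) = _
    rw [map_list_prod, List.map_map, List.map_map]
    refine congrArg List.prod (List.map_congr_left fun l hl => ?_)
    show Φ (Monoid.CoprodI.of l.2) = φ l.1
    rw [hΦ, Monoid.CoprodI.lift_of]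
    exact invHom_apply_ne_one _ _ _ (w.ne_one l hl)
  have hchain : (w.toList.map Sigma.fst).Chain' (· ≠ ·) :=
    (List.isChain_map Sigma.fst).mpr w.chain_ne
  rcases eq_or_ne w.toList [] with hnil | hnil
  · have hwe : w = Monoid.CoprodI.Word.empty := Monoid.CoprodI.Word.ext hnil
    rw [← hprod, hwe, Monoid.CoprodI.Word.prod_empty]
  · exfalso
    refine prod_ne_fix hash a s φ hφ hsa hha hhs hinj (w.toList.map Sigma.fst) hchain
      (by simpa using hnil) ?_
    rw [← hΦu]
    exact hu

lemma vec3_injective {α : Type*} (x y z : α) (hxy : x ≠ y) (hxz : x ≠ z) (hyz : y ≠ z) :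
    Function.Injective ![x, y, z] := by
  intro i j hij
  fin_cases i <;> fin_cases j <;> simp_all

end Helpers

/-- In the eight-symbol construction, the two triples of involutions commute with each other
and together generate a copy of `(ℤ/2 * ℤ/2 * ℤ/2) × (ℤ/2 * ℤ/2 * ℤ/2)`. -/
theorem stmt13 {A : Type*} [Fintype A] [DecidableEq A]
    (hash a₁ b₁ c₁ d₁ a₂ b₂ c₂ d₂ : A)
    (hdist : ([a₁, b₁, c₁, d₁, a₂, b₂, c₂, d₂, hash] : List A).Pairwise (· ≠ ·))
    (φb₁ φc₁ φd₁ φb₂ φc₂ φd₂ : Equiv.Perm (ℤ → A))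
    (hφb₁ : ⇑φb₁ = blockMap (fS a₁ b₁)) (hφc₁ : ⇑φc₁ = blockMap (fS a₁ c₁))
    (hφd₁ : ⇑φd₁ = blockMap (fS a₁ d₁))
    (hφb₂ : ⇑φb₂ = blockMap (fS a₂ b₂)) (hφc₂ : ⇑φc₂ = blockMap (fS a₂ c₂))
    (hφd₂ : ⇑φd₂ = blockMap (fS a₂ d₂)) :
    (∀ g ∈ ({φb₁, φc₁, φd₁} : Set (Equiv.Perm (ℤ → A))),
      ∀ h ∈ ({φb₂, φc₂, φd₂} : Set (Equiv.Perm (ℤ → A))), g * h = h * g) ∧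
    Nonempty
      (↥(Subgroup.closure
          (({φb₁, φc₁, φd₁} ∪ {φb₂, φc₂, φd₂}) : Set (Equiv.Perm (ℤ → A)))) ≃*
        (Monoid.CoprodI fun _ : Fin 3 => Multiplicative (ZMod 2)) ×
          (Monoid.CoprodI fun _ : Fin 3 => Multiplicative (ZMod 2))) := by
  -- Extract pairwise distinctness facts
  simp only [List.pairwise_cons, List.mem_cons, List.mem_singleton, List.not_mem_nil,
    forall_eq_or_imp, forall_eq, false_implies, implies_true, and_true] at hdist
  obtain ⟨⟨hab1, hac1, had1, haa2, hab2, hac2, had2, hah⟩,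
    ⟨hb1c1, hb1d1, hb1a2, hb1b2, hb1c2, hb1d2, hb1h⟩,
    ⟨hc1d1, hc1a2, hc1b2, hc1c2, hc1d2, hc1h⟩,
    ⟨hd1a2, hd1b2, hd1c2, hd1d2, hd1h⟩,
    ⟨ha2b2, ha2c2, ha2d2, ha2h⟩,
    ⟨hb2c2, hb2d2, hb2h⟩, ⟨hc2d2, hc2h⟩, hd2h, -, -⟩ := hdist
  -- commuting and involution helpers
  have comm_of : ∀ (a s a' t : A) (ψ χ : Equiv.Perm (ℤ → A)),
      ⇑ψ = blockMap (fS a s) → ⇑χ = blockMap (fS a' t) →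
      a ≠ a' → a ≠ t → s ≠ a' → s ≠ t → ψ * χ = χ * ψ := by
    intro a s a' t ψ χ hψ hχ h1 h2 h3 h4
    ext x
    rw [Equiv.Perm.mul_apply, Equiv.Perm.mul_apply, hψ, hχ]
    exact congrFun (blockMap_fS_comm a s a' t h1 h2 h3 h4 x) _
  have inv_of : ∀ (a s : A) (ψ : Equiv.Perm (ℤ → A)),
      ⇑ψ = blockMap (fS a s) → s ≠ a → ψ * ψ = 1 := by
    intro a s ψ hψ hs
    ext x
    rw [Equiv.Perm.mul_apply, Equiv.Perm.one_apply, hψ]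
    exact congrFun (blockMap_fS_invol a s hs x) _
  -- Part 1: the two families commute
  have part1 : ∀ g ∈ ({φb₁, φc₁, φd₁} : Set (Equiv.Perm (ℤ → A))),
      ∀ h ∈ ({φb₂, φc₂, φd₂} : Set (Equiv.Perm (ℤ → A))), g * h = h * g := by
    intro g hg h hh
    simp only [Set.mem_insert_iff, Set.mem_singleton_iff] at hg hh
    rcases hg with rfl | rfl | rfl <;> rcases hh with rfl | rfl | rfl
    · exact comm_of a₁ b₁ a₂ b₂ _ _ hφb₁ hφb₂ haa2 hab2 hb1a2 hb1b2
    · exact comm_of a₁ b₁ a₂ c₂ _ _ hφb₁ hφc₂ haa2 hac2 hb1a2 hb1c2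
    · exact comm_of a₁ b₁ a₂ d₂ _ _ hφb₁ hφd₂ haa2 had2 hb1a2 hb1d2
    · exact comm_of a₁ c₁ a₂ b₂ _ _ hφc₁ hφb₂ haa2 hab2 hc1a2 hc1b2
    · exact comm_of a₁ c₁ a₂ c₂ _ _ hφc₁ hφc₂ haa2 hac2 hc1a2 hc1c2
    · exact comm_of a₁ c₁ a₂ d₂ _ _ hφc₁ hφd₂ haa2 had2 hc1a2 hc1d2
    · exact comm_of a₁ d₁ a₂ b₂ _ _ hφd₁ hφb₂ haa2 hab2 hd1a2 hd1b2
    · exact comm_of a₁ d₁ a₂ c₂ _ _ hφd₁ hφc₂ haa2 hac2 hd1a2 hd1c2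
    · exact comm_of a₁ d₁ a₂ d₂ _ _ hφd₁ hφd₂ haa2 had2 hd1a2 hd1d2
  refine ⟨part1, ?_⟩
  -- Set up the two triples
  set S1 : Fin 3 → A := ![b₁, c₁, d₁] with hS1
  set S2 : Fin 3 → A := ![b₂, c₂, d₂] with hS2
  set P1 : Fin 3 → Equiv.Perm (ℤ → A) := ![φb₁, φc₁, φd₁] with hP1
  set P2 : Fin 3 → Equiv.Perm (ℤ → A) := ![φb₂, φc₂, φd₂] with hP2
  have hφ1 : ∀ i, ⇑(P1 i) = blockMap (fS a₁ (S1 i)) := by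
    intro i; fin_cases i
    · exact hφb₁
    · exact hφc₁
    · exact hφd₁
  have hφ2 : ∀ i, ⇑(P2 i) = blockMap (fS a₂ (S2 i)) := by
    intro i; fin_cases i
    · exact hφb₂
    · exact hφc₂
    · exact hφd₂
  have hsa1 : ∀ i, S1 i ≠ a₁ := by
    intro i; fin_cases i
    · exact hab1.symm
    · exact hac1.symm
    · exact had1.symm
  have hsa2 : ∀ i, S2 i ≠ a₂ := by
    intro i; fin_cases i
    · exact ha2b2.symm
    · exact ha2c2.symm
    · exact ha2d2.symm
  have hhs1 : ∀ i, hash ≠ S1 i := by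
    intro i; fin_cases i
    · exact hb1h.symm
    · exact hc1h.symm
    · exact hd1h.symm
  have hhs2 : ∀ i, hash ≠ S2 i := by
    intro i; fin_cases i
    · exact hb2h.symm
    · exact hc2h.symm
    · exact hd2h.symm
  have hinj1 : Function.Injective S1 := vec3_injective b₁ c₁ d₁ hb1c1 hb1d1 hc1d1
  have hinj2 : Function.Injective S2 := vec3_injective b₂ c₂ d₂ hb2c2 hb2d2 hc2d2
  have hinv1 : ∀ i, P1 i * P1 i = 1 := fun i => inv_of a₁ (S1 i) (P1 i) (hφ1 i) (hsa1 i)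
  have hinv2 : ∀ i, P2 i * P2 i = 1 := fun i => inv_of a₂ (S2 i) (P2 i) (hφ2 i) (hsa2 i)
  have hPcomm : ∀ i j, P1 i * P2 j = P2 j * P1 i := by
    intro i j
    apply part1
    · fin_cases i <;> simp [hP1]
    · fin_cases j <;> simp [hP2]
  -- The two lifted homomorphisms
  set Φ1 : (Monoid.CoprodI fun _ : Fin 3 => Multiplicative (ZMod 2)) →* Equiv.Perm (ℤ → A) :=
    Monoid.CoprodI.lift (fun i => invHom (P1 i) (hinv1 i)) with hΦ1
  set Φ2 : (Monoid.CoprodI fun _ : Fin 3 => Multiplicative (ZMod 2)) →* Equiv.Perm (ℤ → A) :=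
    Monoid.CoprodI.lift (fun i => invHom (P2 i) (hinv2 i)) with hΦ2
  have hcomm : ∀ u v, Commute (Φ1 u) (Φ2 v) := by
    intro u v
    induction u using Monoid.CoprodI.induction_on with
    | one => rw [map_one]; exact Commute.one_left _
    | of i m =>
      induction v using Monoid.CoprodI.induction_on with
      | one => rw [map_one]; exact Commute.one_right _
      | of j m' =>
        rw [hΦ1, hΦ2, Monoid.CoprodI.lift_of, Monoid.CoprodI.lift_of]
        rcases invHom_cases (P1 i) (hinv1 i) m with h | h <;>
          rcases invHom_cases (P2 j) (hinv2 j) m' with h' | h' <;> rw [h, h']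
        · exact hPcomm i j
        · exact Commute.one_right _
        · exact Commute.one_left _
      | mul x y hx hy => rw [map_mul]; exact Commute.mul_right hx hy
    | mul x y hx hy => rw [map_mul]; exact Commute.mul_left hx hy
  set Φ := Φ1.noncommCoprod Φ2 hcomm with hΦ
  have hφ2fix : ∀ v, (Φ2 v) (basePt hash a₁) = basePt hash a₁ := by
    intro v
    induction v using Monoid.CoprodI.induction_on with
    | one => rw [map_one]; rfl
    | of i m =>
      rw [hΦ2, Monoid.CoprodI.lift_of]
      rcases invHom_cases (P2 i) (hinv2 i) m with h | h <;> rw [h]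
      · rw [show ⇑(P2 i) = blockMap (fS a₂ (S2 i)) from hφ2 i]
        rw [blockMap_fS_fix_basePt a₂ (S2 i) hash a₁ ?_ haa2 (hhs2 i) ha2h.symm]
        fin_cases i
        · exact hab2
        · exact hac2
        · exact had2
      · rfl
    | mul x y hx hy => rw [map_mul, Equiv.Perm.mul_apply, hy, hx]
  have hinjΦ : Function.Injective Φ := by
    rw [injective_iff_map_eq_one]
    rintro ⟨u, v⟩ h
    rw [hΦ, MonoidHom.noncommCoprod_apply] at h
    have hufix : (Φ1 u) (basePt hash a₁) = basePt hash a₁ := by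
      have h1 : (Φ1 u * Φ2 v) (basePt hash a₁) = basePt hash a₁ := by rw [h]; rfl
      rwa [Equiv.Perm.mul_apply, hφ2fix v] at h1
    have hu : u = 1 :=
      lift_fix_eq_one hash a₁ S1 P1 hφ1 hsa1 hah.symm hhs1 hinj1 hinv1 u hufix
    have hv : v = 1 := by
      have h2 : Φ2 v = 1 := by rwa [hu, map_one, one_mul] at h
      refine lift_fix_eq_one hash a₂ S2 P2 hφ2 hsa2 ha2h.symm hhs2 hinj2 hinv2 v ?_
      rw [← hΦ2, h2]; rfl
    rw [hu, hv]; rfl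
  have hof1 : ∀ i : Fin 3,
      Φ (Monoid.CoprodI.of (M := fun _ : Fin 3 => Multiplicative (ZMod 2)) (i := i)
        (Multiplicative.ofAdd 1), 1) = P1 i := by
    intro i
    rw [hΦ, MonoidHom.noncommCoprod_apply, map_one Φ2, mul_one, hΦ1, Monoid.CoprodI.lift_of]
    exact invHom_apply_ne_one _ _ _ (by decide)
  have hof2 : ∀ i : Fin 3,
      Φ (1, Monoid.CoprodI.of (M := fun _ : Fin 3 => Multiplicative (ZMod 2)) (i := i)
        (Multiplicative.ofAdd 1)) = P2 i := by
    intro i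
    rw [hΦ, MonoidHom.noncommCoprod_apply, map_one Φ1, one_mul, hΦ2, Monoid.CoprodI.lift_of]
    exact invHom_apply_ne_one _ _ _ (by decide)
  have hrange : Φ.range =
      Subgroup.closure (({φb₁, φc₁, φd₁} ∪ {φb₂, φc₂, φd₂}) : Set (Equiv.Perm (ℤ → A))) := by
    apply le_antisymm
    · rintro x ⟨⟨u, v⟩, rfl⟩
      rw [hΦ, MonoidHom.noncommCoprod_apply]
      have hmem1 : Φ1 u ∈ Subgroup.closure
          (({φb₁, φc₁, φd₁} ∪ {φb₂, φc₂, φd₂}) : Set (Equiv.Perm (ℤ → A))) := by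
        induction u using Monoid.CoprodI.induction_on with
        | one => rw [map_one]; exact one_mem _
        | of i m =>
          rw [hΦ1, Monoid.CoprodI.lift_of]
          rcases invHom_cases (P1 i) (hinv1 i) m with hc | hc <;> rw [hc]
          · apply Subgroup.subset_closure
            fin_cases i <;> simp [hP1]
          · exact one_mem _
        | mul x y hx hy => rw [map_mul]; exact mul_mem hx hy
      have hmem2 : Φ2 v ∈ Subgroup.closure
          (({φb₁, φc₁, φd₁} ∪ {φb₂, φc₂, φd₂}) : Set (Equiv.Perm (ℤ → A))) := by
        induction v using Monoid.CoprodI.induction_on with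
        | one => rw [map_one]; exact one_mem _
        | of i m =>
          rw [hΦ2, Monoid.CoprodI.lift_of]
          rcases invHom_cases (P2 i) (hinv2 i) m with hc | hc <;> rw [hc]
          · apply Subgroup.subset_closure
            fin_cases i <;> simp [hP2]
          · exact one_mem _
        | mul x y hx hy => rw [map_mul]; exact mul_mem hx hy
      exact mul_mem hmem1 hmem2
    · rw [Subgroup.closure_le]
      rintro x hx
      simp only [Set.mem_union, Set.mem_insert_iff, Set.mem_singleton_iff] at hx
      rcases hx with (rfl | rfl | rfl) | (rfl | rfl | rfl)
      · exact ⟨_, by rw [hof1 0]; simp [hP1]⟩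
      · exact ⟨_, by rw [hof1 1]; simp [hP1]⟩
      · exact ⟨_, by rw [hof1 2]; simp [hP1]⟩
      · exact ⟨_, by rw [hof2 0]; simp [hP2]⟩
      · exact ⟨_, by rw [hof2 1]; simp [hP2]⟩
      · exact ⟨_, by rw [hof2 2]; simp [hP2]⟩
  exact ⟨(MulEquiv.subgroupCongr hrange.symm).trans (MonoidHom.ofInjective hinjΦ).symm⟩
end
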